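/- arXiv:2012.10676 — 8 statements merged into one kernel-verified Lean document; each statement's English description precedes it below -/
import Mathlib

section
/- Let X be a Banach space such that the dual space X* contains no closed subspace isomorphic (as a Banach space, via a continuous linear bijection with continuous inverse) to ℓ¹, the space of absolutely summable real sequences. Then X has weak*-sequentially compact dual ball. -/
open Filter Topology MeasureTheory
open scoped ENNReal

noncomputable section

/-- A Banach space `X` has weak*-sequentially compact dual ball if every sequence in the
closed unit ball of `X*` has a weak*-convergent subsequence. -/
def WStarSeqCompactDualBall (X : Type*) [SeminormedAddCommGroup X] [NormedSpace ℝ X] : Prop :=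
  ∀ f : ℕ → (X →L[ℝ] ℝ), (∀ n, ‖f n‖ ≤ 1) →
    ∃ φ : ℕ → ℕ, StrictMono φ ∧ ∃ g : X →L[ℝ] ℝ,
      ∀ x : X, Tendsto (fun k => f (φ k) x) atTop (nhds (g x))

/-- A Banach space `X` is a Grothendieck space if every weak*-convergent sequence in `X*`
is weakly convergent. -/
def GrothendieckSpace (X : Type*) [SeminormedAddCommGroup X] [NormedSpace ℝ X] : Prop :=
  ∀ (f : ℕ → (X →L[ℝ] ℝ)) (g : X →L[ℝ] ℝ),
    (∀ x : X, Tendsto (fun n => f n x) atTop (nhds (g x))) →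
    ∀ F : (X →L[ℝ] ℝ) →L[ℝ] ℝ, Tendsto (fun n => F (f n)) atTop (nhds (F g))

/-- An operator is weakly compact if the closure of the image of the closed unit ball is
compact in the weak topology of the codomain. -/
def IsWeaklyCompactOp {X Y : Type*} [SeminormedAddCommGroup X] [NormedSpace ℝ X]
    [SeminormedAddCommGroup Y] [NormedSpace ℝ Y] (T : X →L[ℝ] Y) : Prop :=
  IsCompact (closure (toWeakSpace ℝ Y '' (T '' Metric.closedBall (0:X) 1)))

/-- `ℓ¹`, the space of absolutely summable real sequences. -/
abbrev ellOne : Type := ↥(lp (fun _ : ℕ => ℝ) 1)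

/-- Two normed spaces are isomorphic if there is a continuous linear bijection between them
with continuous inverse. -/
def IsomorphicBanach (X Y : Type*) [SeminormedAddCommGroup X] [NormedSpace ℝ X]
    [SeminormedAddCommGroup Y] [NormedSpace ℝ Y] : Prop :=
  Nonempty (X ≃L[ℝ] Y)

/-!
Rosenthal's argument. Given `fₙ` in the dual ball and rationals `r < s`, put
`Aₙ = {x ∈ B_X | fₙ x < r}` and `Bₙ = {x ∈ B_X | s < fₙ x}`. Applying the Nash-Williams
(open Galvin–Prikry) theorem to the family of finite sets along which no point alternates between
the `Aₙ` and the `Bₙ`, every infinite `M ⊆ ℕ` contains an infinite `H` such that either no point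
lies in infinitely many `Aₙ` and infinitely many `Bₙ` with `n ∈ H`, or the pairs `(Aₙ, Bₙ)` are
Boolean independent along a subsequence of `H`. Independence gives
`‖∑ aₖ fₖ‖ ≥ (s - r) / 2 * ∑ |aₖ|`, so `a ↦ ∑ aₖ fₖ` maps `ℓ¹` isomorphically onto a closed
subspace of `X*`, which is excluded. Diagonalising over all rational pairs yields a subsequence
without upcrossings at any point of the ball; it converges pointwise, and the limit is a bounded
functional.
-/

open Set

theorem Set.Infinite.inter_Ioi {M : Set ℕ} (hM : M.Infinite) (n : ℕ) : (M ∩ Ioi n).Infinite :=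
  (hM.sdiff (finite_Iic n)).mono fun _ hx => ⟨hx.1, not_le.1 (mem_Iic.not.1 hx.2)⟩

theorem exists_strictMono_forall_tail {P : ℕ → ℕ → Set ℕ → Prop}
    (hP : ∀ k n M, M.Infinite → ∃ N ⊆ M, N.Infinite ∧ P k n N)
    (hmono : ∀ k n M N, N ⊆ M → P k n M → P k n N) {M : Set ℕ} (hM : M.Infinite) :
    ∃ φ : ℕ → ℕ, StrictMono φ ∧ (∀ k, φ k ∈ M) ∧ ∀ k, P k (φ k) (φ '' Ioi k) := by
  have step : ∀ (k : ℕ) (N : {N : Set ℕ // N.Infinite}), ∃ N' : {N : Set ℕ // N.Infinite},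
      N'.1 ⊆ N.1 ∩ Ioi (sInf N.1) ∧ P k (sInf N.1) N'.1 := fun k N =>
    let ⟨N', hsub, hinf, hP'⟩ := hP k (sInf N.1) _ (N.2.inter_Ioi _)
    ⟨⟨N', hinf⟩, hsub, hP'⟩
  choose next hnext_sub hnext using step
  let C : ℕ → {N : Set ℕ // N.Infinite} := fun k => Nat.rec ⟨M, hM⟩ next k
  have hφC : ∀ k, sInf (C k).1 ∈ (C k).1 := fun k => Nat.sInf_mem (C k).2.nonempty
  have hC : Antitone fun k => (C k).1 :=
    antitone_nat_of_succ_le fun k => (hnext_sub k (C k)).trans inter_subset_left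
  refine ⟨fun k => sInf (C k).1, strictMono_nat_of_lt_succ fun k => (hnext_sub k _ (hφC (k + 1))).2,
    fun k => hC (Nat.zero_le k) (hφC k), fun k => hmono _ _ _ _ ?_ (hnext k (C k))⟩
  rintro _ ⟨j, hj, rfl⟩
  exact hC (Nat.succ_le_of_lt hj) (hφC j)

namespace NashWilliams

def IsInitialSegment (s : Finset ℕ) (M : Set ℕ) : Prop :=
  ↑s ⊆ M ∧ ∀ n ∈ M, n ∉ s → ∀ m ∈ s, m < n

def HasInitialSegmentIn (𝓕 : Set (Finset ℕ)) (M : Set ℕ) : Prop :=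
  ∃ s ∈ 𝓕, IsInitialSegment s M

def Accepts (𝓕 : Set (Finset ℕ)) (s : Finset ℕ) (M : Set ℕ) : Prop :=
  ∀ N ⊆ M, N.Infinite → HasInitialSegmentIn 𝓕 (↑s ∪ N)

def Rejects (𝓕 : Set (Finset ℕ)) (s : Finset ℕ) (M : Set ℕ) : Prop :=
  ∀ N ⊆ M, N.Infinite → ¬ Accepts 𝓕 s N

variable {𝓕 : Set (Finset ℕ)} {s : Finset ℕ} {M N : Set ℕ}

theorem IsInitialSegment.card_filter_lt {f : ℕ → ℕ} (hf : StrictMono f)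
    (hs : IsInitialSegment s (range f)) {i : ℕ} (hi : f i ∈ s) :
    (s.filter (· < f i)).card = i := by
  suffices s.filter (· < f i) = (Finset.range i).image f by
    rw [this, Finset.card_image_of_injective _ hf.injective, Finset.card_range]
  ext m
  simp only [Finset.mem_filter, Finset.mem_image, Finset.mem_range]
  constructor
  · rintro ⟨hm, hmi⟩
    obtain ⟨j, rfl⟩ := hs.1 hm
    exact ⟨j, hf.lt_iff_lt.1 hmi, rfl⟩
  · rintro ⟨j, hji, rfl⟩
    refine ⟨by_contra fun hj => ?_, hf hji⟩
    exact lt_asymm (hf hji) (hs.2 _ ⟨j, rfl⟩ hj _ hi)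

theorem Accepts.mono (h : Accepts 𝓕 s M) (hNM : N ⊆ M) : Accepts 𝓕 s N :=
  fun R hR => h R (hR.trans hNM)

theorem Rejects.of_diff_finite (h : Rejects 𝓕 s M) (hNM : (N \ M).Finite) : Rejects 𝓕 s N := by
  intro R hRN hR hacc
  have hRM : (R ∩ M).Infinite := by
    rw [← sdiff_sdiff_right_self]
    exact hR.sdiff (hNM.subset (sdiff_subset_sdiff_left hRN))
  exact h (R ∩ M) inter_subset_right hRM (hacc.mono inter_subset_left)

theorem Rejects.mono (h : Rejects 𝓕 s M) (hNM : N ⊆ M) : Rejects 𝓕 s N :=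
  h.of_diff_finite (by rw [sdiff_eq_empty.2 hNM]; exact finite_empty)

theorem Rejects.not_accepts (h : Rejects 𝓕 s M) (hM : M.Infinite) : ¬ Accepts 𝓕 s M :=
  h M subset_rfl hM

theorem exists_accepts_or_rejects (𝓕 : Set (Finset ℕ)) (s : Finset ℕ) (hM : M.Infinite) :
    ∃ N ⊆ M, N.Infinite ∧ (Accepts 𝓕 s N ∨ Rejects 𝓕 s N) := by
  by_cases h : ∃ N ⊆ M, N.Infinite ∧ Accepts 𝓕 s N
  · obtain ⟨N, hNM, hN, hacc⟩ := h
    exact ⟨N, hNM, hN, .inl hacc⟩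
  · exact ⟨M, subset_rfl, hM, .inr fun N hNM hN hacc => h ⟨N, hNM, hN, hacc⟩⟩

theorem accepts_of_mem (hs : s ∈ 𝓕) (hsM : ∀ n ∈ M, ∀ m ∈ s, m < n) : Accepts 𝓕 s M :=
  fun _ hNM _ => ⟨s, hs, subset_union_left, fun n hn hns => hsM n (hNM (hn.resolve_left hns))⟩

theorem accepts_of_forall_accepts_insert (h : ∀ n ∈ M, Accepts 𝓕 (insert n s) (M ∩ Ioi n)) :
    Accepts 𝓕 s M := by
  intro R hRM hR
  have hnR : sInf R ∈ R := Nat.sInf_mem hR.nonempty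
  have hrest : R \ {sInf R} ⊆ M ∩ Ioi (sInf R) := fun x hx =>
    ⟨hRM hx.1, lt_of_le_of_ne (Nat.sInf_le hx.1) (Ne.symm hx.2)⟩
  have := h _ (hRM hnR) _ hrest (hR.sdiff (finite_singleton _))
  rwa [Finset.coe_insert, insert_union, ← union_insert, insert_sdiff_singleton,
    insert_eq_of_mem hnR] at this

theorem Rejects.exists_rejects_insert (hrej : Rejects 𝓕 s M) (hM : M.Infinite) :
    ∃ N ⊆ M, N.Infinite ∧ ∀ n ∈ N, Rejects 𝓕 (insert n s) N := by
  obtain ⟨φ, hφ, hφM, hdec⟩ := exists_strictMono_forall_tail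
    (P := fun _ n N => Accepts 𝓕 (insert n s) N ∨ Rejects 𝓕 (insert n s) N)
    (fun _ n _ hM => exists_accepts_or_rejects 𝓕 (insert n s) hM)
    (fun _ _ _ _ hNM h => h.imp (·.mono hNM) (·.mono hNM)) hM
  have hφM' : ∀ K : Set ℕ, φ '' K ⊆ M := by
    rintro K _ ⟨k, -, rfl⟩
    exact hφM k
  set Acc := {k | Accepts 𝓕 (insert (φ k) s) (φ '' Ioi k)}
  have hAcc : Acc.Finite := by
    by_contra hinf
    refine hrej _ (hφM' Acc) ((show Acc.Infinite from hinf).image hφ.injective.injOn)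
      (accepts_of_forall_accepts_insert ?_)
    rintro _ ⟨k, hk, rfl⟩
    refine hk.mono ?_
    rintro _ ⟨⟨j, -, rfl⟩, hj⟩
    exact ⟨j, hφ.lt_iff_lt.1 hj, rfl⟩
  obtain ⟨K, hK⟩ := hAcc.bddAbove
  refine ⟨φ '' Ioi K, hφM' _, (Ioi_infinite K).image hφ.injective.injOn, ?_⟩
  rintro _ ⟨k, hk, rfl⟩
  have hrejk : Rejects 𝓕 (insert (φ k) s) (φ '' Ioi k) :=
    (hdec k).resolve_left fun hacc => not_le.2 hk (hK hacc)
  refine hrejk.of_diff_finite (((finite_Ioc K k).image φ).subset ?_)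
  rintro _ ⟨⟨j, hj, rfl⟩, hjk⟩
  exact ⟨j, ⟨hj, not_lt.1 fun h => hjk ⟨j, h, rfl⟩⟩, rfl⟩

theorem exists_rejects_insert_of_forall_mem (SS : Finset (Finset ℕ)) (hM : M.Infinite)
    (hrej : ∀ t ∈ SS, Rejects 𝓕 t M) :
    ∃ N ⊆ M, N.Infinite ∧ ∀ t ∈ SS, ∀ n ∈ N, Rejects 𝓕 (insert n t) N := by
  classical
  induction SS using Finset.induction_on generalizing M with
  | empty => exact ⟨M, subset_rfl, hM, by simp⟩
  | insert t SS _ ih =>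
    obtain ⟨N₁, hN₁M, hN₁, hN₁rej⟩ := ih hM fun u hu => hrej u (Finset.mem_insert_of_mem hu)
    obtain ⟨N, hNN₁, hN, hNrej⟩ :=
      ((hrej t (Finset.mem_insert_self t SS)).mono hN₁M).exists_rejects_insert hN₁
    refine ⟨N, hNN₁.trans hN₁M, hN, fun u hu n hn => ?_⟩
    rcases Finset.mem_insert.1 hu with rfl | hu
    · exact hNrej n hn
    · exact (hN₁rej u hu n (hNN₁ hn)).mono hNN₁

def FusionState (𝓕 : Set (Finset ℕ)) (a : Finset ℕ) (M : Set ℕ) : Prop :=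
  M.Infinite ∧ (∀ n ∈ M, ∀ m ∈ a, m < n) ∧ ∀ t ⊆ a, Rejects 𝓕 t M

theorem FusionState.exists_insert {a : Finset ℕ} (h : FusionState 𝓕 a M) :
    ∃ n ∈ M, ∃ N ⊆ M, FusionState 𝓕 (insert n a) N := by
  classical
  obtain ⟨hM, hbelow, hrej⟩ := h
  obtain ⟨N, hNM, hN, hNrej⟩ := exists_rejects_insert_of_forall_mem a.powerset hM
    fun t ht => hrej t (Finset.mem_powerset.1 ht)
  have hnN : sInf N ∈ N := Nat.sInf_mem hN.nonempty
  refine ⟨sInf N, hNM hnN, N ∩ Ioi (sInf N), inter_subset_left.trans hNM, hN.inter_Ioi _, ?_, ?_⟩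
  · intro x hx m hm
    rcases Finset.mem_insert.1 hm with rfl | hm
    · exact hx.2
    · exact hbelow x (hNM hx.1) m hm
  · intro t ht
    by_cases hnt : sInf N ∈ t
    · rw [← Finset.insert_erase hnt]
      exact (hNrej _ (Finset.mem_powerset.2 (Finset.subset_insert_iff.1 ht)) _ hnN).mono
        inter_subset_left
    · exact (hrej _ ((Finset.subset_insert_iff_of_notMem hnt).1 ht)).mono
        (inter_subset_left.trans hNM)

theorem Rejects.exists_forall_not_mem (hrej : Rejects 𝓕 ∅ M) (hM : M.Infinite) :
    ∃ H ⊆ M, H.Infinite ∧ ∀ s : Finset ℕ, ↑s ⊆ H → s ∉ 𝓕 := by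
  choose! n hnM N hNM hN using fun (p : Finset ℕ × Set ℕ) (hp : FusionState 𝓕 p.1 p.2) =>
    hp.exists_insert
  let st : ℕ → Finset ℕ × Set ℕ := fun k => Nat.rec (∅, M) (fun _ p => (insert (n p) p.1, N p)) k
  have hst : ∀ k, FusionState 𝓕 (st k).1 (st k).2 := by
    intro k
    induction k with
    | zero =>
      exact ⟨hM, fun _ _ m hm => absurd hm (Finset.notMem_empty m),
        fun t ht => by rwa [Finset.subset_empty.1 ht]⟩
    | succ k ih => exact hN _ ih
  have hstM : ∀ k, ↑(st k).1 ∪ (st k).2 ⊆ M := by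
    intro k
    induction k with
    | zero => exact union_subset (by simp [st]) subset_rfl
    | succ k ih =>
      refine union_subset ?_ ((hNM _ (hst k)).trans (subset_union_right.trans ih))
      rw [Finset.coe_insert]
      exact insert_subset (ih (.inr (hnM _ (hst k)))) (subset_union_left.trans ih)
  have hmono : Monotone fun k => ((st k).1 : Set ℕ) :=
    monotone_nat_of_le_succ fun k => Finset.coe_subset.2 (Finset.subset_insert _ _)
  have hnst : ∀ k, n (st k) ∈ (st (k + 1)).1 := fun k => Finset.mem_insert_self _ _
  have hn : StrictMono fun k => n (st k) := strictMono_nat_of_lt_succ fun k =>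
    (hst (k + 1)).2.1 _ (hnM _ (hst (k + 1))) _ (hnst k)
  refine ⟨⋃ k, ↑(st k).1, iUnion_subset fun k => subset_union_left.trans (hstM k),
    (infinite_range_of_injective hn.injective).mono ?_, fun s hs hsF => ?_⟩
  · rintro _ ⟨k, rfl⟩
    exact mem_iUnion.2 ⟨k + 1, hnst k⟩
  obtain ⟨k, hk⟩ := hmono.directed_le.exists_mem_subset_of_finset_subset_biUnion hs
  exact (hst k).2.2 s (Finset.coe_subset.1 hk) |>.not_accepts (hst k).1
    (accepts_of_mem hsF fun x hx m hm => (hst k).2.1 x hx m (hk hm))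

theorem exists_forall_hasInitialSegmentIn_or_forall_not_mem (𝓕 : Set (Finset ℕ))
    (hM : M.Infinite) :
    ∃ H ⊆ M, H.Infinite ∧
      ((∀ N ⊆ H, N.Infinite → HasInitialSegmentIn 𝓕 N) ∨ ∀ s : Finset ℕ, ↑s ⊆ H → s ∉ 𝓕) := by
  obtain ⟨N, hNM, hN, hacc | hrej⟩ := exists_accepts_or_rejects 𝓕 ∅ hM
  · exact ⟨N, hNM, hN, .inl fun R hRN hR => by simpa using hacc R hRN hR⟩
  · obtain ⟨H, hHN, hH, hnot⟩ := hrej.exists_forall_not_mem hN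
    exact ⟨H, hHN.trans hNM, hH, .inr hnot⟩

end NashWilliams

namespace Rosenthal

open NashWilliams

variable {S : Type*} (A B : ℕ → Set S)

def IsIndependent : Prop :=
  ∀ F G : Finset ℕ, Disjoint F G → ∃ x, (∀ k ∈ F, x ∈ A k) ∧ ∀ k ∈ G, x ∈ B k

def Oscillates (N : Set ℕ) (x : S) : Prop :=
  {n ∈ N | x ∈ A n}.Infinite ∧ {n ∈ N | x ∈ B n}.Infinite

def AlternatesOn (s : Finset ℕ) (x : S) : Prop :=
  ∀ p ∈ s, if Even (s.filter (· < p)).card then x ∈ A p else x ∈ B p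

variable {A B} in
theorem Oscillates.mono {N M : Set ℕ} {x : S} (h : Oscillates A B N x) (hNM : N ⊆ M) :
    Oscillates A B M x :=
  ⟨h.1.mono fun _ hn => ⟨hNM hn.1, hn.2⟩, h.2.mono fun _ hn => ⟨hNM hn.1, hn.2⟩⟩

theorem Oscillates.of_frequently {φ : ℕ → ℕ} (hφ : StrictMono φ) (m : ℕ) {x : S}
    (hA : ∃ᶠ k in atTop, x ∈ A (φ k)) (hB : ∃ᶠ k in atTop, x ∈ B (φ k)) :
    Oscillates A B (φ '' Ioi m) x := by
  have key : ∀ C : ℕ → Set S, (∃ᶠ k in atTop, x ∈ C (φ k)) →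
      {n ∈ φ '' Ioi m | x ∈ C n}.Infinite := fun C hC =>
    (((Nat.frequently_atTop_iff_infinite.1 hC).inter_Ioi m).image hφ.injective.injOn).mono <| by
      rintro _ ⟨k, ⟨hk, hkm⟩, rfl⟩
      exact ⟨⟨k, hkm, rfl⟩, hk⟩
  exact ⟨key A hA, key B hB⟩

theorem card_filter_lt_image {f : ℕ → ℕ} (hf : StrictMono f) (t : Finset ℕ) (i : ℕ) :
    ((t.image f).filter (· < f i)).card = (t.filter (· < i)).card := by
  rw [Finset.filter_image, Finset.card_image_of_injective _ hf.injective]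
  simp only [hf.lt_iff_lt]

theorem not_oscillates_of_forall_hasInitialSegmentIn {H : Set ℕ}
    (hH : ∀ N ⊆ H, N.Infinite → HasInitialSegmentIn {s | ¬ ∃ x, AlternatesOn A B s x} N)
    (x : S) : ¬ Oscillates A B H x := by
  rintro ⟨hA, hB⟩
  obtain ⟨f, hf, hfAB⟩ := extraction_forall_of_frequently
    (P := fun i n => if Even i then n ∈ H ∧ x ∈ A n else n ∈ H ∧ x ∈ B n) fun i => by
      split_ifs
      · exact Nat.frequently_atTop_iff_infinite.2 hA
      · exact Nat.frequently_atTop_iff_infinite.2 hB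
  have hfH : range f ⊆ H := by
    rintro _ ⟨i, rfl⟩
    have := hfAB i
    split_ifs at this <;> exact this.1
  obtain ⟨s, hs, hseg⟩ := hH _ hfH (infinite_range_of_injective hf.injective)
  refine hs ⟨x, fun p hp => ?_⟩
  obtain ⟨i, rfl⟩ := hseg.1 hp
  rw [hseg.card_filter_lt hf hp]
  have := hfAB i
  split_ifs at this ⊢ <;> exact this.2

theorem exists_even_card_filter_lt_iff (W : Finset ℕ) (p : ℕ → Prop) [DecidablePred p] :
    ∃ t : Finset ℕ, (∀ m ∈ t, m / 2 ∈ W) ∧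
      ∀ k ∈ W, 2 * k + 1 ∈ t ∧ (Even (t.filter (· < 2 * k + 1)).card ↔ p k) := by
  induction W using Finset.induction_on_max with
  | empty => exact ⟨∅, by simp, by simp⟩
  | insert a W ha ih =>
    obtain ⟨t, htW, ht⟩ := ih
    have hlt : ∀ m ∈ t, m < 2 * a := fun m hm => by have := ha _ (htW m hm); omega
    -- the new odd slot `2 * a + 1` has rank `#u`, where `u` is `t` padded with `2 * a` if needed
    obtain ⟨u, htu, hut, hu⟩ : ∃ u, t ⊆ u ∧ u ⊆ insert (2 * a) t ∧ (Even u.card ↔ p a) := by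
      by_cases h : Even t.card ↔ p a
      · exact ⟨t, subset_rfl, Finset.subset_insert _ _, h⟩
      · refine ⟨insert (2 * a) t, Finset.subset_insert _ _, subset_rfl, ?_⟩
        rw [Finset.card_insert_of_notMem fun hmem => (hlt _ hmem).false, Nat.even_add_one]
        tauto
    have hu_le : ∀ m ∈ u, m ≤ 2 * a := fun m hm => by
      rcases Finset.mem_insert.1 (hut hm) with rfl | hm
      exacts [le_rfl, (hlt m hm).le]
    refine ⟨insert (2 * a + 1) u, fun m hm => ?_, fun k hk => ?_⟩
    · rcases Finset.mem_insert.1 hm with rfl | hm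
      · exact Finset.mem_insert.2 (.inl (by omega))
      rcases Finset.mem_insert.1 (hut hm) with rfl | hm
      · simp
      · exact Finset.mem_insert_of_mem (htW m hm)
    rcases Finset.mem_insert.1 hk with rfl | hk
    · refine ⟨Finset.mem_insert_self _ _, ?_⟩
      rwa [Finset.filter_insert, if_neg (lt_irrefl _),
        Finset.filter_true_of_mem fun m hm => Nat.lt_succ_of_le (hu_le m hm)]
    · have hka := ha k hk
      have hfilter :
          (insert (2 * a + 1) u).filter (· < 2 * k + 1) = t.filter (· < 2 * k + 1) := by
        ext m
        simp only [Finset.mem_filter, Finset.mem_insert]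
        constructor
        · rintro ⟨rfl | hm, hmk⟩
          · omega
          rcases Finset.mem_insert.1 (hut hm) with rfl | hm
          · omega
          · exact ⟨hm, hmk⟩
        · rintro ⟨hm, hmk⟩
          exact ⟨.inr (htu hm), hmk⟩
      exact ⟨Finset.mem_insert_of_mem (htu (ht k hk).1), hfilter ▸ (ht k hk).2⟩

theorem exists_isIndependent_of_forall_alternatesOn {H : Set ℕ} (hH : H.Infinite)
    (h : ∀ s : Finset ℕ, ↑s ⊆ H → ∃ x, AlternatesOn A B s x) :
    ∃ φ : ℕ → ℕ, StrictMono φ ∧ (∀ k, φ k ∈ H) ∧ IsIndependent (A ∘ φ) (B ∘ φ) := by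
  classical
  have he : StrictMono (Nat.nth (· ∈ H)) := Nat.nth_strictMono hH
  have heH : ∀ i, Nat.nth (· ∈ H) i ∈ H := Nat.nth_mem_of_infinite hH
  refine ⟨fun k => Nat.nth (· ∈ H) (2 * k + 1), he.comp fun a b (h : a < b) => by omega,
    fun k => heH _, fun F G hFG => ?_⟩
  obtain ⟨t, -, ht⟩ := exists_even_card_filter_lt_iff (F ∪ G) (· ∈ F)
  obtain ⟨x, hx⟩ := h (t.image (Nat.nth (· ∈ H))) fun _ hm => by
    obtain ⟨i, -, rfl⟩ := Finset.mem_image.1 hm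
    exact heH i
  have hrank : ∀ k ∈ F ∪ G, if Even (t.filter (· < 2 * k + 1)).card
      then x ∈ A (Nat.nth (· ∈ H) (2 * k + 1)) else x ∈ B (Nat.nth (· ∈ H) (2 * k + 1)) :=
    fun k hk => by
      simpa only [card_filter_lt_image he] using hx _ (Finset.mem_image_of_mem _ (ht k hk).1)
  refine ⟨x, fun k hk => ?_, fun k hk => ?_⟩
  · have hkW := Finset.mem_union_left G hk
    simpa only [if_pos ((ht k hkW).2.2 hk), Function.comp_apply] using hrank k hkW
  · have hkW := Finset.mem_union_right F hk
    simpa only [if_neg (mt (ht k hkW).2.1 (Finset.disjoint_right.1 hFG hk)),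
      Function.comp_apply] using hrank k hkW

theorem exists_isIndependent_or_forall_not_oscillates {M : Set ℕ} (hM : M.Infinite) :
    (∃ φ : ℕ → ℕ, StrictMono φ ∧ (∀ k, φ k ∈ M) ∧ IsIndependent (A ∘ φ) (B ∘ φ)) ∨
      ∃ H ⊆ M, H.Infinite ∧ ∀ x, ¬ Oscillates A B H x := by
  obtain ⟨H, hHM, hH, hconv | hind⟩ :=
    exists_forall_hasInitialSegmentIn_or_forall_not_mem {s | ¬ ∃ x, AlternatesOn A B s x} hM
  · exact .inr ⟨H, hHM, hH, not_oscillates_of_forall_hasInitialSegmentIn A B hconv⟩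
  · obtain ⟨φ, hφ, hφH, hφind⟩ :=
      exists_isIndependent_of_forall_alternatesOn A B hH fun s hs => not_not.1 (hind s hs)
    exact .inl ⟨φ, hφ, fun k => hHM (hφH k), hφind⟩

end Rosenthal

section EllOne

variable {E : Type*} [NormedAddCommGroup E] [NormedSpace ℝ E]
  {g : ℕ → E} {C : ℝ}

theorem ellOne.hasSum_abs (a : ellOne) : HasSum (fun k => |a k|) ‖a‖ := by
  simpa using lp.hasSum_norm (p := 1) (by norm_num) a

theorem ellOne.norm_smul_le (hg : ∀ k, ‖g k‖ ≤ C) (a : ellOne) (k : ℕ) :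
    ‖a k • g k‖ ≤ |a k| * C := by
  rw [norm_smul, Real.norm_eq_abs]
  exact mul_le_mul_of_nonneg_left (hg k) (abs_nonneg _)

variable [CompleteSpace E]

theorem ellOne.summable_smul (hg : ∀ k, ‖g k‖ ≤ C) (a : ellOne) :
    Summable fun k => a k • g k :=
  .of_norm_bounded ((ellOne.hasSum_abs a).summable.mul_right C) (ellOne.norm_smul_le hg a)

def ellOneSum (g : ℕ → E) (C : ℝ) (hg : ∀ k, ‖g k‖ ≤ C) : ellOne →L[ℝ] E :=
  LinearMap.mkContinuous
    { toFun := fun a => ∑' k, a k • g k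
      map_add' := fun a b => by
        simp only [lp.coeFn_add, Pi.add_apply, add_smul]
        exact (ellOne.summable_smul hg a).tsum_add (ellOne.summable_smul hg b)
      map_smul' := fun c a => by
        simp only [lp.coeFn_smul, Pi.smul_apply, smul_eq_mul, mul_smul, RingHom.id_apply]
        exact (ellOne.summable_smul hg a).tsum_const_smul c }
    C fun a => by
      rw [mul_comm]
      exact tsum_of_norm_bounded ((ellOne.hasSum_abs a).mul_right C) (ellOne.norm_smul_le hg a)

theorem mul_norm_le_norm_ellOneSum (hg : ∀ k, ‖g k‖ ≤ C) {δ : ℝ}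
    (hlow : ∀ (a : ℕ → ℝ) (n : ℕ),
      δ * ∑ k ∈ Finset.range n, |a k| ≤ ‖∑ k ∈ Finset.range n, a k • g k‖) (a : ellOne) :
    δ * ‖a‖ ≤ ‖ellOneSum g C hg a‖ :=
  le_of_tendsto_of_tendsto' ((ellOne.hasSum_abs a).tendsto_sum_nat.const_mul δ)
    (ellOne.summable_smul hg a).hasSum.tendsto_sum_nat.norm fun n => hlow a n

theorem exists_isClosed_isomorphicBanach_ellOne (hg : ∀ k, ‖g k‖ ≤ C) {δ : ℝ} (hδ : 0 < δ)
    (hlow : ∀ (a : ℕ → ℝ) (n : ℕ),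
      δ * ∑ k ∈ Finset.range n, |a k| ≤ ‖∑ k ∈ Finset.range n, a k • g k‖) :
    ∃ M : Submodule ℝ E, IsClosed (M : Set E) ∧ IsomorphicBanach M ellOne := by
  set T := ellOneSum g C hg
  have hT : AntilipschitzWith (Real.toNNReal δ⁻¹) T := T.antilipschitz_of_bound fun a => by
    rw [Real.coe_toNNReal _ (inv_nonneg.2 hδ.le), inv_mul_eq_div, le_div_iff₀' hδ]
    exact mul_norm_le_norm_ellOneSum hg hlow a
  have hclosed := hT.isClosed_range T.uniformContinuous
  exact ⟨LinearMap.range (T : ellOne →ₗ[ℝ] E), by rwa [LinearMap.coe_range],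
    ⟨(T.equivRange hT.injective hclosed).symm⟩⟩

end EllOne

section Dual

open Rosenthal Metric

variable {X : Type*} [NormedAddCommGroup X] [NormedSpace ℝ X]

theorem mul_sum_abs_le_norm_sum_of_isIndependent {f : ℕ → X →L[ℝ] ℝ} {r s : ℝ}
    (hind : IsIndependent (fun k => {x : closedBall (0 : X) 1 | f k x < r})
      (fun k => {x : closedBall (0 : X) 1 | s < f k x}))
    (a : ℕ → ℝ) (n : ℕ) :
    (s - r) / 2 * ∑ k ∈ Finset.range n, |a k| ≤ ‖∑ k ∈ Finset.range n, a k • f k‖ := by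
  classical
  set g := ∑ k ∈ Finset.range n, a k • f k
  set P := (Finset.range n).filter (0 ≤ a ·)
  set Q := (Finset.range n).filter (¬ 0 ≤ a ·)
  have hPQ : Disjoint P Q := Finset.disjoint_filter_filter_not _ _ _
  -- `x` and `y` push `f k` apart in the direction of the sign of `a k`
  obtain ⟨x, hxQ, hxP⟩ := hind Q P hPQ.symm
  obtain ⟨y, hyP, hyQ⟩ := hind P Q hPQ
  have hgap : (s - r) * ∑ k ∈ Finset.range n, |a k| ≤ g x - g y := by
    simp only [g, FunLike.coe_sum, Finset.sum_apply, FunLike.coe_smul, Pi.smul_apply,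
      smul_eq_mul, ← Finset.sum_sub_distrib, Finset.mul_sum, ← mul_sub]
    refine Finset.sum_le_sum fun k hk => ?_
    by_cases hak : 0 ≤ a k
    · have hx : s < f k x := hxP k (Finset.mem_filter.2 ⟨hk, hak⟩)
      have hy : f k y < r := hyP k (Finset.mem_filter.2 ⟨hk, hak⟩)
      rw [abs_of_nonneg hak]
      nlinarith
    · have hx : f k x < r := hxQ k (Finset.mem_filter.2 ⟨hk, hak⟩)
      have hy : s < f k y := hyQ k (Finset.mem_filter.2 ⟨hk, hak⟩)
      rw [abs_of_neg (not_le.1 hak)]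
      nlinarith
  have hball : ∀ z : closedBall (0 : X) 1, |g z| ≤ ‖g‖ := fun z =>
    (g.le_opNorm z).trans (mul_le_of_le_one_right (norm_nonneg g) (mem_closedBall_zero_iff.1 z.2))
  linarith [le_abs_self (g x), neg_abs_le (g y), hball x, hball y]

theorem exists_forall_not_oscillates_of_not_isomorphicBanach_ellOne
    (h : ¬ ∃ M : Submodule ℝ (X →L[ℝ] ℝ),
      IsClosed (M : Set (X →L[ℝ] ℝ)) ∧ IsomorphicBanach ↥M ellOne)
    {f : ℕ → X →L[ℝ] ℝ} {C : ℝ} (hf : ∀ n, ‖f n‖ ≤ C) {r s : ℝ} (hrs : r < s) {M : Set ℕ}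
    (hM : M.Infinite) :
    ∃ H ⊆ M, H.Infinite ∧ ∀ x, ¬ Oscillates (fun n => {x : closedBall (0 : X) 1 | f n x < r})
      (fun n => {x | s < f n x}) H x := by
  refine (exists_isIndependent_or_forall_not_oscillates _ _ hM).resolve_left ?_
  rintro ⟨φ, -, -, hφ⟩
  exact h (exists_isClosed_isomorphicBanach_ellOne (fun k => hf (φ k)) (by linarith)
    (mul_sum_abs_le_norm_sum_of_isIndependent hφ))

theorem exists_tendsto_of_tendsto_closedBall {f : ℕ → X →L[ℝ] ℝ} {C : ℝ} (hf : ∀ n, ‖f n‖ ≤ C)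
    (h : ∀ x ∈ closedBall (0 : X) 1, ∃ L, Tendsto (fun n => f n x) atTop (𝓝 L)) :
    ∃ g : X →L[ℝ] ℝ, ∀ x, Tendsto (fun n => f n x) atTop (𝓝 (g x)) := by
  have hX : ∀ x, ∃ L, Tendsto (fun n => f n x) atTop (𝓝 L) := by
    intro x
    set c := ‖x‖ + 1
    have hc : 0 < c := by positivity
    have hcx : c⁻¹ • x ∈ closedBall (0 : X) 1 := by
      rw [mem_closedBall_zero_iff, norm_smul, norm_inv, Real.norm_of_nonneg hc.le,
        inv_mul_le_one₀ hc]
      linarith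
    obtain ⟨L, hL⟩ := h _ hcx
    refine ⟨c * L, (hL.const_mul c).congr fun n => ?_⟩
    rw [map_smul, smul_eq_mul, mul_inv_cancel_left₀ hc.ne']
  choose L hL using hX
  let L' : X →ₗ[ℝ] ℝ := linearMapOfTendsto L (fun n => (f n : X →ₗ[ℝ] ℝ)) (tendsto_pi_nhds.2 hL)
  refine ⟨L'.mkContinuous C fun x => ?_, hL⟩
  refine le_of_tendsto (hL x).norm (Eventually.of_forall fun n => ?_)
  exact ((f n).le_opNorm x).trans (mul_le_mul_of_nonneg_right (hf n) (norm_nonneg x))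

end Dual

theorem wstar_seq_compact_dual_ball_of_no_ellOne_in_dual_general
    (X : Type*) [NormedAddCommGroup X] [NormedSpace ℝ X]
    (h : ¬ ∃ M : Submodule ℝ (X →L[ℝ] ℝ),
        IsClosed (M : Set (X →L[ℝ] ℝ)) ∧ IsomorphicBanach ↥M ellOne) :
    WStarSeqCompactDualBall X := by
  intro f hf
  have : Nonempty {p : ℚ × ℚ // p.1 < p.2} := ⟨⟨(0, 1), zero_lt_one⟩⟩
  obtain ⟨u, hu⟩ := exists_surjective_nat {p : ℚ × ℚ // p.1 < p.2}
  -- past position `m`, the subsequence does not oscillate across the `m`-th rational pair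
  obtain ⟨φ, hφ, -, hφu⟩ := exists_strictMono_forall_tail
    (P := fun m _ N => ∀ x, ¬ Rosenthal.Oscillates
      (fun n => {x : Metric.closedBall (0 : X) 1 | f n x < (u m).1.1})
      (fun n => {x | ((u m).1.2 : ℝ) < f n x}) N x)
    (fun m _ _ => exists_forall_not_oscillates_of_not_isomorphicBanach_ellOne h hf
      (Rat.cast_lt.2 (u m).2))
    (fun _ _ _ _ hNM hM x hx => hM x (hx.mono hNM)) infinite_univ
  refine ⟨φ, hφ, exists_tendsto_of_tendsto_closedBall (fun n => hf (φ n)) fun x hx => ?_⟩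
  have hbdd : ∀ k, |f (φ k) x| ≤ 1 := fun k => ((f (φ k)).le_opNorm x).trans
    (mul_le_one₀ (hf _) (norm_nonneg x) (mem_closedBall_zero_iff.1 hx))
  obtain ⟨hb, hb'⟩ := isBoundedUnder_le_abs.1 (isBoundedUnder_of ⟨1, hbdd⟩)
  refine tendsto_of_no_upcrossings Rat.denseRange_cast ?_ hb hb'
  rintro _ ⟨r, rfl⟩ _ ⟨s, rfl⟩ hrs ⟨hr, hs⟩
  obtain ⟨m, hm⟩ := hu ⟨(r, s), Rat.cast_lt.1 hrs⟩
  have := hφu m ⟨x, hx⟩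
  simp only [hm] at this
  exact this (.of_frequently _ _ hφ m hr hs)

/-- If `X*` contains no closed subspace isomorphic to `ℓ¹`, then `X` has
weak*-sequentially compact dual ball. -/
theorem wstar_seq_compact_dual_ball_of_no_ellOne_in_dual
    (X : Type*) [NormedAddCommGroup X] [NormedSpace ℝ X] [CompleteSpace X]
    (h : ¬ ∃ M : Submodule ℝ (X →L[ℝ] ℝ),
        IsClosed (M : Set (X →L[ℝ] ℝ)) ∧ IsomorphicBanach ↥M ellOne) :
    WStarSeqCompactDualBall X :=
  wstar_seq_compact_dual_ball_of_no_ellOne_in_dual_general X h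
end
end

section
/- If a Banach space X is a Grothendieck space and has weak*-sequentially compact dual ball, then X is reflexive. -/
/-
If `F ∈ X**` is not in the image of `X`, which is closed, then `d = dist(F, X) > 0`. Helly's
theorem then lets us choose, one at a time, `f n` in the unit ball of `X*` and bounded `x n ∈ X`
with `f n (x m) = 0` for `m < n` and `f n (x m) = d / 2` for `m ≥ n`. A weak*-convergent
subsequence of `(f n)` has a limit `g` vanishing at every `x m`, while a weak* cluster point
`G ∈ X**` of `(x m)` has `G (f n) = d / 2` for all `n` and `G g = 0`: the subsequence does not
converge weakly to `g`, contradicting the Grothendieck property.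
-/

open Filter Topology MeasureTheory
open scoped ENNReal

noncomputable section

open Metric

section Helly

variable {ι : Type*} [Fintype ι]

theorem exists_forall_apply_eq_of_forall_sum_eq_zero {K Y : Type*} [Field K] [AddCommGroup Y]
    [Module K Y] (μ : ι → Y →ₗ[K] K) (c : ι → K)
    (h : ∀ a : ι → K, (∀ y, ∑ i, a i * μ i y = 0) → ∑ i, a i * c i = 0) :
    ∃ y, ∀ i, μ i y = c i := by
  classical
  suffices c ∈ LinearMap.range (LinearMap.pi μ) by
    obtain ⟨y, hy⟩ := this
    exact ⟨y, congrFun hy⟩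
  rw [← Subspace.forall_mem_dualAnnihilator_apply_eq_zero_iff]
  intro φ hφ
  rw [Submodule.mem_dualAnnihilator] at hφ
  have hφ_eq (v : ι → K) : φ v = ∑ i, φ (Pi.single i 1) * v i := by
    conv_lhs => rw [LinearMap.pi_apply_eq_sum_univ φ v]
    simp only [smul_eq_mul, mul_comm]
    congr! 3 with i
    ext j
    simp [Pi.single_apply, eq_comm]
  rw [hφ_eq]
  refine h _ fun y => ?_
  rw [← hφ _ (LinearMap.mem_range_self _ y), hφ_eq]
  rfl

variable {Y : Type*} [SeminormedAddCommGroup Y] [NormedSpace ℝ Y]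

theorem norm_mk_iInf_ker_le_of_abs_sum_le (μ : ι → StrongDual ℝ Y) (c : ι → ℝ) {M : ℝ}
    (hM : 0 ≤ M) (h : ∀ a : ι → ℝ, |∑ i, a i * c i| ≤ M * ‖∑ i, a i • μ i‖) {y : Y}
    (hy : ∀ i, μ i y = c i) :
    ‖(Submodule.Quotient.mk y : Y ⧸ ⨅ i, LinearMap.ker (μ i : Y →ₗ[ℝ] ℝ))‖ ≤ M := by
  set K := ⨅ i, LinearMap.ker (μ i : Y →ₗ[ℝ] ℝ)
  -- A norming functional of `mk y` factors through `Y ⧸ K`, so it is a combination of the `μ i`.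
  obtain ⟨ψ, hψ, hψy⟩ := exists_dual_vector'' ℝ (Submodule.Quotient.mk y : Y ⧸ K)
  have hker : K ≤ LinearMap.ker (ψ.toLinearMap ∘ₗ K.mkQ) := fun z hz => by
    simp [(Submodule.Quotient.mk_eq_zero K).2 hz]
  obtain ⟨a, ha⟩ := (Submodule.mem_span_range_iff_exists_fun ℝ).1
    (mem_span_of_iInf_ker_le_ker hker)
  have ha' (z : Y) : (∑ i, a i • μ i) z = ψ (K.mkQ z) := by
    simpa using LinearMap.congr_fun ha z
  have hnorm : ‖∑ i, a i • μ i‖ ≤ 1 := by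
    refine ContinuousLinearMap.opNorm_le_bound _ zero_le_one fun z => ?_
    rw [ha']
    calc ‖ψ (K.mkQ z)‖ ≤ ‖ψ‖ * ‖K.mkQ z‖ := ψ.le_opNorm _
      _ ≤ 1 * ‖z‖ := by gcongr; exact Submodule.Quotient.norm_mk_le _ _
  calc ‖(Submodule.Quotient.mk y : Y ⧸ K)‖ = ∑ i, a i * c i := by
        rw [RCLike.ofReal_real_eq_id, id] at hψy
        rw [← hψy, ← Submodule.mkQ_apply, ← ha']
        simp [hy]
    _ ≤ |∑ i, a i * c i| := le_abs_self _
    _ ≤ M * ‖∑ i, a i • μ i‖ := h a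
    _ ≤ M := mul_le_of_le_one_right hM hnorm

-- Helly's theorem.
theorem exists_norm_le_forall_apply_eq (μ : ι → StrongDual ℝ Y) (c : ι → ℝ) {M : ℝ}
    (hM : 0 ≤ M) (h : ∀ a : ι → ℝ, |∑ i, a i * c i| ≤ M * ‖∑ i, a i • μ i‖) {ε : ℝ}
    (hε : 0 < ε) : ∃ y : Y, ‖y‖ ≤ M + ε ∧ ∀ i, μ i y = c i := by
  obtain ⟨y₀, hy₀⟩ := exists_forall_apply_eq_of_forall_sum_eq_zero (fun i => (μ i : Y →ₗ[ℝ] ℝ))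
    c fun a ha => by
      have hzero : ∑ i, a i • μ i = 0 := by ext z; simpa using ha z
      simpa [hzero] using h a
  obtain ⟨y, hy, hy_lt⟩ := Submodule.Quotient.norm_mk_lt
    (Submodule.Quotient.mk y₀ : Y ⧸ ⨅ i, LinearMap.ker (μ i : Y →ₗ[ℝ] ℝ)) hε
  refine ⟨y, by linarith [norm_mk_iInf_ker_le_of_abs_sum_le μ c hM h hy₀], fun i => ?_⟩
  have hker := Submodule.mem_iInf _ |>.1 ((Submodule.Quotient.eq _).1 hy) i
  rw [LinearMap.mem_ker, map_sub, sub_eq_zero] at hker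
  exact hker.trans (hy₀ i)

end Helly

theorem abs_mul_infDist_le_norm_smul_add {E : Type*} [SeminormedAddCommGroup E] [NormedSpace ℝ E]
    (S : Submodule ℝ E) (z : E) (a : ℝ) {s : E} (hs : s ∈ S) :
    |a| * infDist z S ≤ ‖a • z + s‖ := by
  rcases eq_or_ne a 0 with rfl | ha
  · simp
  have hmem : -a⁻¹ • s ∈ S := S.smul_mem _ hs
  calc |a| * infDist z S ≤ |a| * ‖z - -a⁻¹ • s‖ := by
        gcongr; exact (dist_eq_norm z _).symm ▸ infDist_le_dist_of_mem hmem
    _ = ‖a • z + s‖ := by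
        rw [← Real.norm_eq_abs, ← norm_smul, smul_sub, smul_smul, mul_neg, mul_inv_cancel₀ ha,
          neg_one_smul, sub_neg_eq_add]

section DoubleDual

variable {X : Type*} [SeminormedAddCommGroup X] [NormedSpace ℝ X]

local notation "J" => NormedSpace.inclusionInDoubleDual ℝ X

theorem exists_norm_le_one_apply_eq_half_infDist {ι : Type*} [Fintype ι]
    (F : StrongDual ℝ (StrongDual ℝ X)) (x : ι → X) :
    ∃ f : StrongDual ℝ X, ‖f‖ ≤ 1 ∧ F f = infDist F (Set.range J) / 2 ∧ ∀ i, f (x i) = 0 := by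
  set d := infDist F (Set.range J)
  set μ : Option ι → StrongDual ℝ (StrongDual ℝ X) := fun o => o.elim F fun i => J (x i)
  set c : Option ι → ℝ := fun o => o.elim (d / 2) fun _ => 0
  have hsep (a : Option ι → ℝ) : |∑ o, a o * c o| ≤ 1 / 2 * ‖∑ o, a o • μ o‖ := by
    have hd : |d / 2| = d / 2 := abs_of_nonneg (div_nonneg infDist_nonneg two_pos.le)
    have hmem : J (∑ i, a (some i) • x i) ∈ (J : X →ₗ[ℝ] StrongDual ℝ (StrongDual ℝ X)).range :=
      LinearMap.mem_range_self _ _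
    have := abs_mul_infDist_le_norm_smul_add _ F (a none) hmem
    simp only [μ, c, Fintype.sum_option, Option.elim, Finset.sum_const_zero, mul_zero, add_zero,
      abs_mul, hd, map_sum, map_smul] at this ⊢
    rw [LinearMap.coe_range, ContinuousLinearMap.coe_coe] at this
    linarith
  obtain ⟨f, hf_norm, hf⟩ := exists_norm_le_forall_apply_eq μ c (by norm_num) hsep
    (by norm_num : (0 : ℝ) < 1 / 2)
  exact ⟨f, by linarith, hf none, fun i => hf (some i)⟩

theorem exists_norm_le_forall_apply_eq_doubleDual {ι : Type*} [Fintype ι]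
    (F : StrongDual ℝ (StrongDual ℝ X)) (f : ι → StrongDual ℝ X) :
    ∃ x : X, ‖x‖ ≤ ‖F‖ + 1 ∧ ∀ i, f i x = F (f i) :=
  exists_norm_le_forall_apply_eq f (fun i => F (f i)) (norm_nonneg F) (fun a => by
    simpa only [map_sum, map_smul, smul_eq_mul, Real.norm_eq_abs] using F.le_opNorm (∑ i, a i • f i))
    one_pos

theorem exists_seq_apply_eq_ite (F : StrongDual ℝ (StrongDual ℝ X)) :
    ∃ (f : ℕ → StrongDual ℝ X) (x : ℕ → X), (∀ n, ‖f n‖ ≤ 1) ∧ (∀ n, ‖x n‖ ≤ ‖F‖ + 1) ∧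
      ∀ m n, f n (x m) = if m < n then 0 else infDist F (Set.range J) / 2 := by
  set θ := infDist F (Set.range J) / 2
  let P : StrongDual ℝ X × X → Prop := fun p =>
    ‖p.1‖ ≤ 1 ∧ ‖p.2‖ ≤ ‖F‖ + 1 ∧ F p.1 = θ ∧ p.1 p.2 = θ
  let r : StrongDual ℝ X × X → StrongDual ℝ X × X → Prop := fun p q =>
    q.1 p.2 = 0 ∧ p.1 q.2 = θ
  obtain ⟨p, hP, hr⟩ := exists_seq_of_forall_finset_exists P r fun s hs => by
    obtain ⟨f, hf_norm, hFf, hf⟩ :=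
      exists_norm_le_one_apply_eq_half_infDist F fun q : s => q.1.2
    obtain ⟨x, hx_norm, hx⟩ :=
      exists_norm_le_forall_apply_eq_doubleDual F fun o : Option s => o.elim f (·.1.1)
    refine ⟨(f, x), ⟨hf_norm, hx_norm, hFf, (hx none).trans hFf⟩, fun q hq => ⟨hf ⟨q, hq⟩, ?_⟩⟩
    exact (hx (some ⟨q, hq⟩)).trans (hs q hq).2.2.1
  refine ⟨fun n => (p n).1, fun n => (p n).2, fun n => (hP n).1, fun n => (hP n).2.1,
    fun m n => ?_⟩
  rcases lt_trichotomy m n with hmn | rfl | hnm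
  · simp [hmn, (hr m n hmn).1]
  · simp [(hP m).2.2.2]
  · simp [hnm.not_gt, (hr n m hnm).2]

end DoubleDual

theorem exists_tendsto_ultrafilter_apply_of_norm_le {E α : Type*} [SeminormedAddCommGroup E]
    [NormedSpace ℝ E] (U : Ultrafilter α) (φ : α → StrongDual ℝ E) {C : ℝ}
    (hφ : ∀ i, ‖φ i‖ ≤ C) :
    ∃ G : StrongDual ℝ E, ∀ e, Tendsto (fun i => φ i e) U (𝓝 (G e)) := by
  have hU : (U.map (StrongDual.toWeakDual ∘ φ) : Filter (WeakDual ℝ E)) ≤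
      𝓟 (WeakDual.toStrongDual ⁻¹' closedBall 0 C) := by
    rw [Ultrafilter.coe_map, le_principal_iff, mem_map]
    exact univ_mem' fun i => by simpa using hφ i
  obtain ⟨G, -, hG⟩ := (WeakDual.isCompact_closedBall 0 C).ultrafilter_le_nhds _ hU
  exact ⟨WeakDual.toStrongDual G, fun e => ((WeakDual.eval_continuous e).tendsto G).comp hG⟩

section Grothendieck

variable {X : Type*} [SeminormedAddCommGroup X] [NormedSpace ℝ X]

theorem GrothendieckSpace.eq_zero_of_apply_eq_ite (hG : GrothendieckSpace X)
    (hW : WStarSeqCompactDualBall X) {f : ℕ → StrongDual ℝ X} {x : ℕ → X} {C θ : ℝ}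
    (hf : ∀ n, ‖f n‖ ≤ 1) (hx : ∀ n, ‖x n‖ ≤ C)
    (hfx : ∀ m n, f n (x m) = if m < n then 0 else θ) : θ = 0 := by
  obtain ⟨φ, hφ, g, hfg⟩ := hW f hf
  have hgx (m : ℕ) : g (x m) = 0 := by
    refine tendsto_nhds_unique (hfg (x m)) (tendsto_const_nhds.congr' ?_)
    filter_upwards [eventually_gt_atTop m] with k hk
    rw [hfx, if_pos (hk.trans_le hφ.le_apply)]
  obtain ⟨U, hU⟩ := Ultrafilter.exists_le (atTop : Filter ℕ)
  obtain ⟨G, hG_lim⟩ := exists_tendsto_ultrafilter_apply_of_norm_le U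
    (fun m => NormedSpace.inclusionInDoubleDual ℝ X (x m))
    fun m => (NormedSpace.double_dual_bound ℝ X (x m)).trans (hx m)
  have hGg : G g = 0 := tendsto_nhds_unique (hG_lim g) (by simp [hgx])
  have hGf (n : ℕ) : G (f n) = θ := by
    refine tendsto_nhds_unique (hG_lim (f n)) (tendsto_const_nhds.congr' ?_)
    filter_upwards [hU (eventually_ge_atTop n)] with m hm
    simp [hfx, hm.not_gt]
  have := hG (fun k => f (φ k)) g hfg G
  simp only [hGf, hGg] at this
  exact tendsto_nhds_unique tendsto_const_nhds this

end Grothendieck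

/-- a Grothendieck space with weak*-sequentially compact dual ball is
reflexive. -/
theorem reflexive_of_grothendieck_of_wstar_seq_compact
    (X : Type*) [NormedAddCommGroup X] [NormedSpace ℝ X] [CompleteSpace X]
    (hG : GrothendieckSpace X) (hW : WStarSeqCompactDualBall X) :
    Function.Surjective (NormedSpace.inclusionInDoubleDual ℝ X) := by
  intro F
  by_contra hF
  have hiso : Isometry (NormedSpace.inclusionInDoubleDual ℝ X) :=
    (NormedSpace.inclusionInDoubleDualLi ℝ).isometry
  have hd : 0 < infDist F (Set.range (NormedSpace.inclusionInDoubleDual ℝ X)) :=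
    (hiso.isClosedEmbedding.isClosed_range.notMem_iff_infDist_pos ⟨_, 0, rfl⟩).1 hF
  obtain ⟨f, x, hf, hx, hfx⟩ := exists_seq_apply_eq_ite F
  linarith [hG.eq_zero_of_apply_eq_ite hW hf hx hfx]
end
end

section
/- Let X be a Grothendieck Banach space and let M be a closed subspace of X such that the quotient Banach space X/M is separable. Then M (with the induced norm) is a Grothendieck space. -/
/-!
Extend a weak*-convergent sequence `f n` in `M*` by Hahn–Banach to a bounded sequence `F n` in
`X*`. Along a subsequence, `F n` converges at lifts of a dense sequence of `X ⧸ M` (Tychonoff),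
and it converges on `M`; since the points where a bounded sequence of functionals converges form
a closed set, it converges weak* on all of `X`. As `X` is Grothendieck, this subsequence converges
weakly, and so do its restrictions to `M`. Every subsequence of `f n` having such a further
subsequence, `f n` converges weakly.
-/

open Filter Topology MeasureTheory
open scoped ENNReal

noncomputable section

section

variable {𝕜 E G : Type*} [NontriviallyNormedField 𝕜] [SeminormedAddCommGroup E] [NormedSpace 𝕜 E]
  [SeminormedAddCommGroup G] [NormedSpace 𝕜 G]

theorem exists_norm_le_of_tendsto_apply [CompleteSpace E] {f : ℕ → E →L[𝕜] G} {g : E → G}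
    (h : ∀ x, Tendsto (fun n => f n x) atTop (𝓝 (g x))) : ∃ C, ∀ n, ‖f n‖ ≤ C :=
  banach_steinhaus fun x => (h x).norm.bddAbove_range.imp fun _ hC n => hC ⟨n, rfl⟩

theorem isClosed_setOf_cauchySeq_apply {F : ℕ → E →L[𝕜] G} {C : ℝ} (hF : ∀ n, ‖F n‖ ≤ C) :
    IsClosed {x | CauchySeq fun n => F n x} := by
  let D : ℕ × ℕ → E →L[𝕜] G := fun p => F p.1 - F p.2
  have hD : ∃ C, ∀ p, ‖D p‖ ≤ C :=
    ⟨C + C, fun p => (norm_sub_le _ _).trans (add_le_add (hF _) (hF _))⟩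
  have hequi : Equicontinuous ((↑) ∘ D) := ((NormedSpace.equicontinuous_TFAE D).out 5 1).mp hD
  -- `CauchySeq (F · x)` says that the equicontinuous family `D` tends to `0` at `x`.
  simpa only [cauchySeq_iff_tendsto_dist_atTop_0, dist_eq_norm, D, Function.comp_apply,
    sub_apply, Pi.zero_apply, ← tendsto_zero_iff_norm_tendsto_zero] using
    hequi.isClosed_setOfPred_tendsto (l := atTop) (f := 0) continuous_const

theorem exists_strictMono_cauchySeq_apply [ProperSpace G] {F : ℕ → E →L[𝕜] G} {C : ℝ}
    (hF : ∀ n, ‖F n‖ ≤ C) (x : ℕ → E) :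
    ∃ φ : ℕ → ℕ, StrictMono φ ∧ ∀ j, CauchySeq fun k => F (φ k) (x j) := by
  have hmem : ∀ n, (fun j => F n (x j)) ∈ Set.univ.pi fun j => Metric.closedBall 0 (C * ‖x j‖) :=
    fun n j _ => mem_closedBall_zero_iff.mpr ((F n).le_of_opNorm_le (hF n) (x j))
  obtain ⟨a, -, φ, hφ, ha⟩ :=
    (isCompact_univ_pi fun j => isCompact_closedBall (0 : G) _).tendsto_subseq hmem
  exact ⟨φ, hφ, fun j => ((continuous_apply j).tendsto a |>.comp ha).cauchySeq⟩

theorem cauchySeq_apply_of_dense_mkQ {F : ℕ → E →L[𝕜] G} {C : ℝ} (hF : ∀ n, ‖F n‖ ≤ C)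
    {M : Submodule 𝕜 E} (hM : ∀ m ∈ M, CauchySeq fun n => F n m) {s : Set E}
    (hs : Dense (M.mkQ '' s)) (hs' : ∀ x ∈ s, CauchySeq fun n => F n x) (x : E) :
    CauchySeq fun n => F n x := by
  have hsub : M.mkQ ⁻¹' (M.mkQ '' s) ⊆ {x | CauchySeq fun n => F n x} := by
    rintro y ⟨z, hz, hzy⟩
    have hyz : y - z ∈ M := (Submodule.Quotient.eq M).mp hzy.symm
    show CauchySeq fun n => F n y
    simpa only [Pi.add_def, map_sub, add_sub_cancel] using (hs' z hz).add (hM _ hyz)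
  have huniv : {x | CauchySeq fun n => F n x} = Set.univ :=
    (isClosed_setOf_cauchySeq_apply hF).closure_eq ▸
      ((hs.preimage M.isOpenMap_mkQ).mono hsub).closure_eq
  exact Set.eq_univ_iff_forall.mp huniv x

theorem exists_strictMono_tendsto_apply_of_separableSpace_quotient [CompleteSpace E]
    [ProperSpace G] [T2Space G] (M : Submodule 𝕜 E) [TopologicalSpace.SeparableSpace (E ⧸ M)]
    {F : ℕ → E →L[𝕜] G} {C : ℝ} (hF : ∀ n, ‖F n‖ ≤ C)
    (hM : ∀ m ∈ M, CauchySeq fun n => F n m) :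
    ∃ φ : ℕ → ℕ, StrictMono φ ∧ ∃ H : E →L[𝕜] G,
      ∀ x, Tendsto (fun k => F (φ k) x) atTop (𝓝 (H x)) := by
  obtain ⟨u, hu⟩ := TopologicalSpace.exists_dense_seq (E ⧸ M)
  choose x hx using fun j => M.mkQ_surjective (u j)
  obtain ⟨φ, hφ, hφx⟩ := exists_strictMono_cauchySeq_apply hF x
  have hcauchy : ∀ y, CauchySeq fun k => F (φ k) y :=
    cauchySeq_apply_of_dense_mkQ (fun k => hF (φ k))
      (fun m hm => (hM m hm).comp_tendsto hφ.tendsto_atTop) (s := Set.range x)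
      (by rwa [← Set.range_comp, show M.mkQ ∘ x = u from funext hx]) (by simpa using hφx)
  choose h hh using fun y => cauchySeq_tendsto_of_complete (hcauchy y)
  exact ⟨φ, hφ, continuousLinearMapOfTendsto _ (tendsto_pi_nhds.mpr hh), hh⟩
end

/-- a closed subspace of a Grothendieck space with separable quotient is
Grothendieck. -/
theorem grothendieck_subspace_of_separable_quotient
    (X : Type*) [NormedAddCommGroup X] [NormedSpace ℝ X] [CompleteSpace X]
    (M : Submodule ℝ X) (hM : IsClosed (M : Set X))
    (hX : GrothendieckSpace X)
    (hsep : TopologicalSpace.SeparableSpace (X ⧸ M)) :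
    GrothendieckSpace ↥M := by
  have : CompleteSpace M := hM.completeSpace_coe
  intro f g hfg Φ
  obtain ⟨C, hC⟩ := exists_norm_le_of_tendsto_apply hfg
  choose F hFf hFnorm using fun n => exists_extension_norm_eq M (f n)
  let R : (X →L[ℝ] ℝ) →L[ℝ] M →L[ℝ] ℝ := ContinuousLinearMap.precomp ℝ M.subtypeL
  have hRF : ∀ n, R (F n) = f n := fun n => ContinuousLinearMap.ext (hFf n)
  refine tendsto_of_subseq_tendsto fun ns hns => ?_
  have hfns : ∀ m : M, Tendsto (fun n => F (ns n) m) atTop (𝓝 (g m)) := fun m => by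
    simpa only [hFf, Function.comp_def] using (hfg m).comp hns
  obtain ⟨φ, hφ, H, hH⟩ := exists_strictMono_tendsto_apply_of_separableSpace_quotient M
    (fun n => (hFnorm (ns n)).le.trans (hC (ns n))) fun m hm => (hfns ⟨m, hm⟩).cauchySeq
  have hRH : R H = g := ContinuousLinearMap.ext fun m =>
    tendsto_nhds_unique (hH m) ((hfns m).comp hφ.tendsto_atTop)
  refine ⟨φ, ?_⟩
  simpa only [ContinuousLinearMap.comp_apply, hRF, hRH] using hX _ H hH (Φ.comp R)
end
end

section
/- Let S be a closed subspace of ℓ∞ containing c₀ such that the quotient Banach space ℓ∞/S is separable. Then S is an ℓ∞-Grothendieck subspace. -/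
/-!
Write `dₙ = fₙ - g`, extend it by Hahn–Banach to `Dₙ ∈ (ℓ∞)*`; the `Dₙ` are uniformly bounded
(Banach–Steinhaus) and tend to `0` pointwise on `S`. If `∑ᵢ zᵢ Dₙ(eᵢ)` does not tend to `0`, a
gliding hump gives a subsequence `D_{ν k}` and consecutive blocks `I_k` of indices such that
`D_{ν k}` is large on `z · 1_{I_k}`. Rosenthal's lemma, applied to the superadditive set functions
`A ↦ ‖D_{ν k}‖` on `ℓ∞(⋃_{j ∈ A} I_j)`, gives an infinite `J` such that `D_{ν k}` hardly sees the
blocks `I_j`, `j ∈ J \ {k}`, for `k ∈ J`. Take an uncountable almost disjoint family `(B_x)` of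
subsets of `J`: by separability of `ℓ∞/S`, two of the vectors `z · 1_{⋃_{j ∈ B_x} I_j}` are close
modulo `S`, so some `s ∈ S` is close to their difference, and then `|D_{ν k}(s)|` stays bounded
below for the infinitely many `k ∈ B_x \ B_y`, contradicting `Dₙ(s) → 0`.
-/

open Filter Topology MeasureTheory
open scoped ENNReal

noncomputable section

/-- `ℓ∞`, the space of bounded real sequences with the sup norm. -/
abbrev ellInfty : Type := ↥(lp (fun _ : ℕ => ℝ) ∞)

/-- `c₀`, the subspace of `ℓ∞` of sequences converging to `0`. -/
def cZero : Submodule ℝ ellInfty where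
  carrier := {x | Tendsto (fun i => (x : ℕ → ℝ) i) atTop (nhds 0)}
  zero_mem' := by
    simpa [lp.coeFn_zero] using (tendsto_const_nhds : Tendsto (fun _ : ℕ => (0:ℝ)) atTop (nhds 0))
  add_mem' := by
    intro x y hx hy
    have := hx.add hy
    simpa [lp.coeFn_add] using this
  smul_mem' := by
    intro c x hx
    have := hx.const_mul c
    simpa [lp.coeFn_smul, smul_eq_mul] using this

/-- The `i`-th standard unit vector in `ℓ∞`. -/
def eVec (i : ℕ) : ellInfty := lp.single ∞ i 1

lemma eVec_mem_cZero (i : ℕ) : eVec i ∈ cZero := by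
  have h : (fun n => (eVec i : ℕ → ℝ) n) =ᶠ[atTop] fun _ => (0:ℝ) := by
    filter_upwards [eventually_gt_atTop i] with n hn
    simp [eVec, lp.single_apply, hn.ne']
  exact Tendsto.congr' h.symm tendsto_const_nhds

/-- The `i`-th standard unit vector, as an element of a subspace `S` of `ℓ∞` containing `c₀`. -/
def eIn (S : Submodule ℝ ellInfty) (hS : cZero ≤ S) (i : ℕ) : ↥S :=
  ⟨eVec i, hS (eVec_mem_cZero i)⟩

/-- A sequence `(fₙ)` in `S*` is `σ(S*,ℓ∞)`-convergent to `g` if, testing against the unit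
vectors `eᵢ`, it converges against every bounded real sequence `z`. -/
def SigmaLinfConv (S : Submodule ℝ ellInfty) (hS : cZero ≤ S)
    (f : ℕ → (↥S →L[ℝ] ℝ)) (g : ↥S →L[ℝ] ℝ) : Prop :=
  ∀ z : ℕ → ℝ, (∃ C : ℝ, ∀ i, |z i| ≤ C) →
    Tendsto (fun n => ∑' i, z i * f n (eIn S hS i)) atTop
      (nhds (∑' i, z i * g (eIn S hS i)))

/-- `S` is an `ℓ∞`-Grothendieck subspace if it contains `c₀` and every weak*-convergent
sequence in `S*` is `σ(S*,ℓ∞)`-convergent. -/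
def IsLinfGrothendieck (S : Submodule ℝ ellInfty) : Prop :=
  ∃ hS : cZero ≤ S, ∀ (f : ℕ → (↥S →L[ℝ] ℝ)) (g : ↥S →L[ℝ] ℝ),
    (∀ x : ↥S, Tendsto (fun n => f n x) atTop (nhds (g x))) →
    SigmaLinfConv S hS f g

lemma ContinuousLinearMap.exists_norm_eq_abs_apply_eq {E : Type*} [SeminormedAddCommGroup E]
    [NormedSpace ℝ E] (f : E →L[ℝ] ℝ) (x : E) : ∃ x', ‖x'‖ = ‖x‖ ∧ |f x| = f x' := by
  rcases abs_cases (f x) with ⟨h, -⟩ | ⟨h, -⟩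
  · exact ⟨x, rfl, h⟩
  · exact ⟨-x, norm_neg x, by rw [h, map_neg]⟩

lemma Submodule.exists_mem_norm_sub_sub_lt {E : Type*} [SeminormedAddCommGroup E]
    [NormedSpace ℝ E] {S : Submodule ℝ E} {x y : E} {δ : ℝ}
    (h : dist (S.mkQ x) (S.mkQ y) < δ) : ∃ s ∈ S, ‖x - y - s‖ < δ := by
  rw [dist_eq_norm, ← map_sub] at h
  obtain ⟨r, hr, hrδ⟩ := QuotientAddGroup.norm_lt_iff.1 h
  exact ⟨x - y - r, (Submodule.Quotient.eq S).1 hr.symm, by simpa using hrδ⟩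

lemma exists_ne_dist_lt_of_uncountable {ι Q : Type*} [Uncountable ι] [PseudoMetricSpace Q]
    [TopologicalSpace.SeparableSpace Q] (p : ι → Q) {δ : ℝ} (hδ : 0 < δ) :
    ∃ x y, x ≠ y ∧ dist (p x) (p y) < δ := by
  by_contra! h
  have hdisj : (Set.univ : Set ι).PairwiseDisjoint fun x => Metric.ball (p x) (δ / 2) :=
    fun x _ y _ hxy => Metric.ball_disjoint_ball (by linarith [h x y hxy])
  exact Set.not_countable_univ <| hdisj.countable_of_isOpen (fun _ _ => Metric.isOpen_ball)
    fun x _ => Metric.nonempty_ball.2 (half_pos hδ)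

instance : Uncountable (ℕ → Bool) := by
  classical
  refine ⟨fun h => ?_⟩
  obtain ⟨f, hf⟩ := h.exists_injective_nat'
  refine Function.cantor_injective (fun s : Set ℕ => f fun i => decide (i ∈ s))
    (hf.comp fun s t hst => ?_)
  ext i
  simpa using congrFun hst i

def prefixCode (x : ℕ → Bool) (n : ℕ) : ℕ := Encodable.encode (List.ofFn fun i : Fin n => x i)

lemma prefixCode_injective (x : ℕ → Bool) : Function.Injective (prefixCode x) := fun n n' h => by
  simpa using congrArg List.length (Encodable.encode_injective h)

lemma le_of_prefixCode_eq {x y : ℕ → Bool} {i n n' : ℕ} (hxy : x i ≠ y i)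
    (h : prefixCode x n = prefixCode y n') : n ≤ i := by
  have hlist := Encodable.encode_injective h
  obtain rfl : n = n' := by simpa using congrArg List.length hlist
  by_contra! hin
  have := congrArg (·[i]?) hlist
  simp [hin] at this
  exact hxy this

lemma Set.Infinite.exists_almost_disjoint_family {J : Set ℕ} (hJ : J.Infinite) :
    ∃ B : (ℕ → Bool) → Set ℕ, (∀ x, B x ⊆ J) ∧ (∀ x, (B x).Infinite) ∧
      ∀ x y, x ≠ y → (B x ∩ B y).Finite := by
  set e := hJ.natEmbedding
  have he : Function.Injective fun n => (e n : ℕ) := Subtype.val_injective.comp e.injective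
  refine ⟨fun x => Set.range fun n => (e (prefixCode x n) : ℕ), fun x => ?_, fun x => ?_,
    fun x y hxy => ?_⟩
  · rintro _ ⟨n, rfl⟩; exact (e _).2
  · exact Set.infinite_range_of_injective (he.comp (prefixCode_injective x))
  · obtain ⟨i, hi⟩ := Function.ne_iff.1 hxy
    refine ((Set.finite_Iic i).image fun n => (e (prefixCode x n) : ℕ)).subset ?_
    rintro _ ⟨⟨n, rfl⟩, ⟨n', h⟩⟩
    exact ⟨n, le_of_prefixCode_eq hi (he h).symm, rfl⟩

lemma Set.Infinite.exists_pairwise_disjoint_infinite {N : Set ℕ} (hN : N.Infinite) :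
    ∃ P : ℕ → Set ℕ, (∀ j, P j ⊆ N) ∧ (∀ j, (P j).Infinite) ∧
      Pairwise (Function.onFun Disjoint P) := by
  set e := hN.natEmbedding
  have he : Function.Injective fun n => (e n : ℕ) := Subtype.val_injective.comp e.injective
  refine ⟨fun j => Set.range fun i => (e (Nat.pair j i) : ℕ), ?_, fun j => ?_, ?_⟩
  · rintro j _ ⟨i, rfl⟩; exact (e _).2
  · exact Set.infinite_range_of_injective fun i i' h => by simpa using he h
  · refine fun j j' hjj' => Set.disjoint_left.2 ?_
    rintro _ ⟨i, rfl⟩ ⟨i', h⟩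
    simpa [hjj'.symm] using he h

section Rosenthal

variable {μ : ℕ → Set ℕ → ℝ} {ε : ℝ}

lemma exists_infinite_subset_forall_exists_disjoint_lt
    (h : ∀ J : Set ℕ, J.Infinite → ∃ k ∈ J, ε < μ k (J \ {k})) {N : Set ℕ} (hN : N.Infinite) :
    ∃ N' ⊆ N, N'.Infinite ∧ ∀ k ∈ N', ∃ W ⊆ N \ {k}, ε < μ k W ∧ Disjoint W (N' \ {k}) := by
  obtain ⟨P, hPN, hPinf, hPdisj⟩ := hN.exists_pairwise_disjoint_infinite
  choose k hkP hk using fun j => h (P j) (hPinf j)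
  have hkinj : Function.Injective k := fun j j' hjj' => by
    by_contra hne
    exact Set.disjoint_left.1 (hPdisj hne) (hkP j) (hjj' ▸ hkP j')
  refine ⟨Set.range k, Set.range_subset_iff.2 fun j => hPN j (hkP j),
    Set.infinite_range_of_injective hkinj, ?_⟩
  rintro _ ⟨j, rfl⟩
  refine ⟨P j \ {k j}, Set.sdiff_subset_sdiff_left (hPN j), hk j, ?_⟩
  refine Set.disjoint_left.2 fun i ⟨hij, hik⟩ ⟨⟨j', hj'⟩, hik'⟩ => hik ?_
  subst hj'
  obtain rfl : j = j' := by
    by_contra hne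
    exact Set.disjoint_left.1 (hPdisj hne) hij (hkP j')
  exact hik'.elim rfl

lemma exists_infinite_forall_exists_disjoint_mul_le (hnonneg : ∀ k A, 0 ≤ μ k A)
    (hsuper : ∀ k A B, Disjoint A B → μ k A + μ k B ≤ μ k (A ∪ B))
    (h : ∀ J : Set ℕ, J.Infinite → ∃ k ∈ J, ε < μ k (J \ {k})) (r : ℕ) :
    ∃ N : Set ℕ, N.Infinite ∧ ∀ k ∈ N, ∃ U, Disjoint U (N \ {k}) ∧ r * ε ≤ μ k U := by
  induction r with
  | zero => exact ⟨Set.univ, Set.infinite_univ, fun k _ => ⟨∅, by simp, by simpa using hnonneg k ∅⟩⟩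
  | succ r ih =>
    obtain ⟨N, hN, hU⟩ := ih
    obtain ⟨N', hN'N, hN', hW⟩ := exists_infinite_subset_forall_exists_disjoint_lt h hN
    refine ⟨N', hN', fun k hk => ?_⟩
    obtain ⟨U, hUN, hUk⟩ := hU k (hN'N hk)
    obtain ⟨W, hWN, hWk, hWN'⟩ := hW k hk
    refine ⟨U ∪ W, Disjoint.union_left (hUN.mono_right ?_) hWN', ?_⟩
    · exact Set.sdiff_subset_sdiff_left hN'N
    · have := hsuper k U W (hUN.mono_right hWN)
      push_cast
      linarith

theorem rosenthal_lemma (hε : 0 < ε) {M : ℝ} (hnonneg : ∀ k A, 0 ≤ μ k A)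
    (hsuper : ∀ k A B, Disjoint A B → μ k A + μ k B ≤ μ k (A ∪ B)) (hbdd : ∀ k A, μ k A ≤ M) :
    ∃ J : Set ℕ, J.Infinite ∧ ∀ k ∈ J, μ k (J \ {k}) ≤ ε := by
  by_contra! h
  obtain ⟨r, hr⟩ := exists_nat_gt (M / ε)
  obtain ⟨N, hN, hU⟩ := exists_infinite_forall_exists_disjoint_mul_le hnonneg hsuper h r
  obtain ⟨k, hk⟩ := hN.nonempty
  obtain ⟨U, -, hUk⟩ := hU k hk
  have := hbdd k U
  rw [div_lt_iff₀ hε] at hr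
  linarith

end Rosenthal

lemma exists_hump_step {a : ℕ → ℕ → ℝ} (hsum : ∀ k, Summable (a k))
    (hnull : ∀ i, Tendsto (a · i) atTop (𝓝 0)) {ε η : ℝ} (hbig : ∀ k, ε ≤ |∑' i, a k i|)
    (hη : η < ε) (N m₀ : ℕ) :
    ∃ k, N < k ∧ ∃ m₁, m₀ < m₁ ∧ η ≤ |∑ i ∈ Finset.Ico m₀ m₁, a k i| := by
  have hδ : 0 < (ε - η) / 2 := by linarith
  have hhead : Tendsto (fun k => ∑ i ∈ Finset.range m₀, a k i) atTop (𝓝 0) := by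
    simpa using tendsto_finsetSum (Finset.range m₀) fun i _ => hnull i
  obtain ⟨k, hkN, hk⟩ :=
    ((eventually_gt_atTop N).and (hhead.abs.eventually (gt_mem_nhds (by rwa [abs_zero])))).exists
  obtain ⟨m₁, hm₁, htail⟩ := ((eventually_gt_atTop m₀).and
    ((tendsto_sum_nat_add (a k)).abs.eventually (gt_mem_nhds (by rwa [abs_zero])))).exists
  refine ⟨k, hkN, m₁, hm₁, ?_⟩
  have hsplit := (hsum k).sum_add_tsum_nat_add m₁
  rw [← Finset.sum_range_add_sum_Ico _ hm₁.le] at hsplit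
  have := (hbig k).trans (hsplit ▸ abs_add_three _ _ _)
  linarith

theorem exists_gliding_hump {a : ℕ → ℕ → ℝ} (hsum : ∀ k, Summable (a k))
    (hnull : ∀ i, Tendsto (a · i) atTop (𝓝 0)) {ε η : ℝ} (hbig : ∀ k, ε ≤ |∑' i, a k i|)
    (hη : η < ε) :
    ∃ ν m : ℕ → ℕ, StrictMono ν ∧ StrictMono m ∧ m 0 = 0 ∧
      ∀ k, η ≤ |∑ i ∈ Finset.Ico (m k) (m (k + 1)), a (ν k) i| := by
  choose next hnext m' hm' hblock using exists_hump_step hsum hnull hbig hη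
  set step : ℕ × ℕ → ℕ × ℕ := fun p => (next p.1 p.2, m' p.1 p.2)
  set q : ℕ → ℕ × ℕ := fun k => step^[k] (0, 0)
  have hq (k : ℕ) : q (k + 1) = step (q k) := Function.iterate_succ_apply' step k (0, 0)
  refine ⟨fun k => (q (k + 1)).1, fun k => (q k).2, strictMono_nat_of_lt_succ fun k => ?_,
    strictMono_nat_of_lt_succ fun k => ?_, rfl, fun k => ?_⟩
  · rw [hq (k + 1)]; exact hnext _ _
  · rw [hq k]; exact hm' _ _
  · simp only [hq k]; exact hblock _ _

def blockIndex (m : ℕ → ℕ) (i : ℕ) : ℕ := Nat.findGreatest (m · ≤ i) i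

lemma blockIndex_eq_iff {m : ℕ → ℕ} (hm : StrictMono m) (hm0 : m 0 = 0) {i k : ℕ} :
    blockIndex m i = k ↔ m k ≤ i ∧ i < m (k + 1) := by
  rw [blockIndex, Nat.findGreatest_eq_iff]
  constructor
  · rintro ⟨hki, hk, hgt⟩
    refine ⟨?_, ?_⟩
    · rcases eq_or_ne k 0 with rfl | hk0
      · simp [hm0]
      · exact hk hk0
    · by_contra! h
      exact hgt (Nat.lt_succ_self k) ((hm.id_le _).trans h) h
  · rintro ⟨hki, hik⟩
    exact ⟨(hm.id_le k).trans hki, fun _ => hki, fun n hkn _ h =>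
      (h.trans_lt hik).not_ge (hm.monotone hkn)⟩

lemma preimage_blockIndex_singleton {m : ℕ → ℕ} (hm : StrictMono m) (hm0 : m 0 = 0) (k : ℕ) :
    blockIndex m ⁻¹' {k} = ↑(Finset.Ico (m k) (m (k + 1))) := by
  ext i; simp [blockIndex_eq_iff hm hm0]

namespace LinfGrothendieck

open Set

@[simp] lemma eVec_apply (i j : ℕ) : (eVec i : ℕ → ℝ) j = if j = i then 1 else 0 := by
  simp [eVec, lp.single_apply, Pi.single_apply]

def indicatorVec (U : Set ℕ) : ellInfty :=
  ⟨U.indicator 1, memℓp_infty ⟨1, by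
    rintro _ ⟨i, rfl⟩
    by_cases hi : i ∈ U <;> simp [hi]⟩⟩

def restrict (U : Set ℕ) : ellInfty →L[ℝ] ellInfty :=
  ContinuousLinearMap.mul ℝ ellInfty (indicatorVec U)

lemma coe_restrict (U : Set ℕ) (x : ellInfty) : ⇑(restrict U x) = U.indicator ⇑x := by
  ext i
  by_cases hi : i ∈ U <;> simp [restrict, indicatorVec, lp.infty_coeFn_mul, hi]

lemma norm_restrict_le (U : Set ℕ) (x : ellInfty) : ‖restrict U x‖ ≤ ‖x‖ := by
  refine lp.norm_le_of_forall_le (norm_nonneg x) fun i => ?_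
  rw [coe_restrict]
  exact (norm_indicator_le_norm_self _ _).trans (lp.norm_apply_le_norm ENNReal.top_ne_zero x i)

lemma restrict_union {U V : Set ℕ} (h : Disjoint U V) (x : ellInfty) :
    restrict (U ∪ V) x = restrict U x + restrict V x :=
  lp.ext <| by rw [lp.coeFn_add, coe_restrict, coe_restrict, coe_restrict,
    indicator_union_of_disjoint h]; rfl

lemma restrict_restrict_of_subset {U V : Set ℕ} (h : U ⊆ V) (x : ellInfty) :
    restrict V (restrict U x) = restrict U x :=
  lp.ext <| by rw [coe_restrict, coe_restrict, indicator_indicator, inter_eq_right.2 h]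

lemma norm_restrict_add_restrict_le {U V : Set ℕ} (h : Disjoint U V) {x y : ellInfty}
    (hx : ‖x‖ ≤ 1) (hy : ‖y‖ ≤ 1) : ‖restrict U x + restrict V y‖ ≤ 1 := by
  refine lp.norm_le_of_forall_le zero_le_one fun i => ?_
  rw [lp.coeFn_add, Pi.add_apply, coe_restrict, coe_restrict]
  have hxi := (lp.norm_apply_le_norm ENNReal.top_ne_zero x i).trans hx
  have hyi := (lp.norm_apply_le_norm ENNReal.top_ne_zero y i).trans hy
  by_cases hU : i ∈ U
  · simpa [hU, disjoint_left.1 h hU] using hxi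
  · by_cases hV : i ∈ V
    · simpa [hU, hV] using hyi
    · simp [hU, hV]

lemma restrict_finset (F : Finset ℕ) (x : ellInfty) :
    restrict F x = ∑ i ∈ F, x i • eVec i := by
  refine lp.ext (funext fun j => ?_)
  rw [coe_restrict, lp.coeFn_sum, Finset.sum_apply]
  by_cases hj : j ∈ F <;> simp [hj]

def toLinfty (z : ℕ → ℝ) (hz : ∃ C, ∀ i, |z i| ≤ C) : ellInfty :=
  ⟨z, memℓp_infty <| let ⟨C, hC⟩ := hz; ⟨C, by rintro _ ⟨i, rfl⟩; exact hC i⟩⟩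

@[simp] lemma coe_toLinfty (z : ℕ → ℝ) (hz : ∃ C, ∀ i, |z i| ≤ C) : ⇑(toLinfty z hz) = z := rfl

lemma opNorm_restrict_le (U : Set ℕ) : ‖restrict U‖ ≤ 1 :=
  ContinuousLinearMap.opNorm_le_bound _ zero_le_one fun x => by
    simpa using norm_restrict_le U x

def normOn (D : ellInfty →L[ℝ] ℝ) (U : Set ℕ) : ℝ := ‖D.comp (restrict U)‖

section normOn

variable (D : ellInfty →L[ℝ] ℝ)

lemma normOn_le (U : Set ℕ) : normOn D U ≤ ‖D‖ :=
  (D.opNorm_comp_le _).trans <| mul_le_of_le_one_right (norm_nonneg D) (opNorm_restrict_le U)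

lemma abs_apply_restrict_le (U : Set ℕ) (x : ellInfty) :
    |D (restrict U x)| ≤ normOn D U * ‖x‖ :=
  (D.comp (restrict U)).le_opNorm x

lemma normOn_mono {U V : Set ℕ} (h : U ⊆ V) : normOn D U ≤ normOn D V := by
  have : D.comp (restrict U) = (D.comp (restrict V)).comp (restrict U) := by
    ext x; simp [restrict_restrict_of_subset h]
  rw [normOn, this]
  exact ((D.comp _).opNorm_comp_le _).trans <|
    mul_le_of_le_one_right (norm_nonneg _) (opNorm_restrict_le U)

lemma normOn_add_normOn_le {U V : Set ℕ} (h : Disjoint U V) :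
    normOn D U + normOn D V ≤ normOn D (U ∪ V) := by
  set N := normOn D (U ∪ V)
  have key : ∀ x y : ellInfty, ‖x‖ = 1 → ‖y‖ = 1 →
      |D (restrict U x)| + |D (restrict V y)| ≤ N := by
    intro x y hx hy
    obtain ⟨x', hx', hUx⟩ := (D.comp (restrict U)).exists_norm_eq_abs_apply_eq x
    obtain ⟨y', hy', hVy⟩ := (D.comp (restrict V)).exists_norm_eq_abs_apply_eq y
    calc |D (restrict U x)| + |D (restrict V y)|
        = D (restrict (U ∪ V) (restrict U x' + restrict V y')) := by
          rw [map_add, restrict_restrict_of_subset subset_union_left,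
            restrict_restrict_of_subset subset_union_right, map_add]
          exact congrArg₂ (· + ·) hUx hVy
      _ ≤ N * ‖restrict U x' + restrict V y'‖ :=
          (le_abs_self _).trans (abs_apply_restrict_le D _ _)
      _ ≤ N := mul_le_of_le_one_right (norm_nonneg _)
          (norm_restrict_add_restrict_le h (hx'.trans hx).le (hy'.trans hy).le)
  have hU : normOn D U ≤ N := normOn_mono D subset_union_left
  have hV : normOn D V ≤ N := normOn_mono D subset_union_right
  suffices normOn D U ≤ N - normOn D V by linarith
  refine ContinuousLinearMap.opNorm_le_of_unit_norm (by linarith) fun x hx => ?_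
  suffices normOn D V ≤ N - |D (restrict U x)| by
    rw [ContinuousLinearMap.comp_apply, Real.norm_eq_abs]; linarith
  have hUx : |D (restrict U x)| ≤ N :=
    (abs_apply_restrict_le D U x).trans (by rw [hx, mul_one]; exact hU)
  refine ContinuousLinearMap.opNorm_le_of_unit_norm (by linarith) fun y hy => ?_
  have := key x y hx hy
  rw [ContinuousLinearMap.comp_apply, Real.norm_eq_abs]
  linarith

lemma abs_apply_restrict_le_of_subset {U V W R : Set ℕ}
    (hUV : Disjoint U V) (hV : V ⊆ R) (hW : W ⊆ R) (w s : ellInfty) :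
    |D (restrict U w)| ≤
      |D s| + 2 * (normOn D R * ‖w‖) + ‖D‖ * ‖restrict (U ∪ V) w - restrict W w - s‖ := by
  set r := restrict (U ∪ V) w - restrict W w - s
  have hsplit : D (restrict U w) = D s - D (restrict V w) + D (restrict W w) + D r := by
    simp only [r, map_sub, restrict_union hUV, map_add]; ring
  have hVw := (abs_apply_restrict_le D V w).trans <|
    mul_le_mul_of_nonneg_right (normOn_mono D hV) (norm_nonneg w)
  have hWw := (abs_apply_restrict_le D W w).trans <|
    mul_le_mul_of_nonneg_right (normOn_mono D hW) (norm_nonneg w)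
  have hr : |D r| ≤ ‖D‖ * ‖r‖ := D.le_opNorm r
  rw [hsplit]
  calc _ ≤ |D s| + |D (restrict V w)| + |D (restrict W w)| + |D r| := by
        grw [abs_add_le, abs_add_le, abs_sub]
    _ ≤ _ := by linarith

end normOn

section Subspace

variable {S : Submodule ℝ ellInfty} (hS : cZero ≤ S)

@[simp] lemma coe_eIn (i : ℕ) : (eIn S hS i : ellInfty) = eVec i := rfl

lemma sum_abs_apply_eIn_le (h : ↥S →L[ℝ] ℝ) (F : Finset ℕ) :
    ∑ i ∈ F, |h (eIn S hS i)| ≤ ‖h‖ := by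
  obtain ⟨c, hc, hch⟩ : ∃ c : ℕ → ℝ, (∀ i, |c i| ≤ 1) ∧
      ∀ i, c i * h (eIn S hS i) = |h (eIn S hS i)| :=
    ⟨fun i => SignType.sign (h (eIn S hS i)), fun i => by
      rcases lt_trichotomy (h (eIn S hS i)) 0 with hi | hi | hi <;> simp [hi],
      fun i => sign_mul_self _⟩
  set v : ↥S := ∑ i ∈ F, c i • eIn S hS i
  have hv : ‖v‖ ≤ 1 := by
    change ‖(v : ellInfty)‖ ≤ 1
    refine lp.norm_le_of_forall_le zero_le_one fun j => ?_
    simp only [v, Submodule.coe_sum, Submodule.coe_smul, lp.coeFn_sum, Finset.sum_apply,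
      lp.coeFn_smul, Pi.smul_apply, eIn, eVec_apply, smul_eq_mul, mul_ite, mul_one, mul_zero,
      Finset.sum_ite_eq]
    split_ifs
    · exact hc j
    · simp
  calc ∑ i ∈ F, |h (eIn S hS i)| = h v := by simp [v, map_sum, hch]
    _ ≤ ‖h‖ * ‖v‖ := (le_abs_self _).trans (h.le_opNorm v)
    _ ≤ ‖h‖ := mul_le_of_le_one_right (norm_nonneg h) hv

lemma summable_mul_apply_eIn (h : ↥S →L[ℝ] ℝ) {z : ℕ → ℝ} (hz : ∃ C, ∀ i, |z i| ≤ C) :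
    Summable fun i => z i * h (eIn S hS i) := by
  obtain ⟨C, hC⟩ := hz
  refine ((summable_of_sum_le (fun i => abs_nonneg _) (sum_abs_apply_eIn_le hS h)).mul_left C
    ).of_norm_bounded fun i => ?_
  rw [Real.norm_eq_abs, abs_mul]
  exact mul_le_mul_of_nonneg_right (hC i) (abs_nonneg _)

variable [TopologicalSpace.SeparableSpace (ellInfty ⧸ S)] {D : ℕ → ellInfty →L[ℝ] ℝ} {M : ℝ}
  (hM : ∀ k, ‖D k‖ ≤ M) (hD : ∀ x ∈ S, Tendsto (D · x) atTop (𝓝 0)) {z : ℕ → ℝ}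
  (hz : ∃ C, ∀ i, |z i| ≤ C)
include hS hM hD hz

theorem not_forall_le_abs_tsum_mul_apply_eVec {ε : ℝ} (hε : 0 < ε) :
    ¬ ∀ k, ε ≤ |∑' i, z i * D k (eVec i)| := by
  intro hbig
  set w := toLinfty z hz
  obtain ⟨ν, m, hν, hm, hm0, hblock⟩ := exists_gliding_hump (a := fun k i => z i * D k (eVec i))
    (fun k => summable_mul_apply_eIn hS ((D k).comp S.subtypeL) hz)
    (fun i => by simpa using (hD _ (hS (eVec_mem_cZero i))).const_mul (z i)) hbig
    (half_lt_self hε)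
  set b := blockIndex m
  have hM0 : 0 ≤ M := (norm_nonneg _).trans (hM 0)
  set η := ε / (8 * (‖w‖ + 1))
  have hη : 0 < η := by positivity
  have hηw : η * ‖w‖ ≤ ε / 8 := by
    rw [div_mul_eq_mul_div, div_le_div_iff₀ (by positivity) (by positivity)]
    nlinarith [norm_nonneg w]
  obtain ⟨J, hJ, hJsmall⟩ := rosenthal_lemma (μ := fun k A => normOn (D (ν k)) (b ⁻¹' A)) hη
    (fun _ _ => norm_nonneg _)
    (fun k A B hAB => by simpa using normOn_add_normOn_le (D (ν k)) (hAB.preimage b))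
    (fun k A => (normOn_le _ _).trans (hM _))
  obtain ⟨B, hBJ, hBinf, hBad⟩ := hJ.exists_almost_disjoint_family
  set δ := ε / (8 * (M + 1))
  have hδ : 0 < δ := by positivity
  have hMδ : M * δ ≤ ε / 8 := by
    rw [mul_div_assoc', div_le_div_iff₀ (by positivity) (by positivity)]
    nlinarith
  obtain ⟨x, y, hxy, hdist⟩ :=
    exists_ne_dist_lt_of_uncountable (fun x => S.mkQ (restrict (b ⁻¹' B x) w)) hδ
  obtain ⟨s, hsS, hs⟩ := Submodule.exists_mem_norm_sub_sub_lt hdist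
  have hlarge : ∀ k ∈ B x \ B y, ε / 8 ≤ |D (ν k) s| := by
    rintro k ⟨hkx, hky⟩
    have h := abs_apply_restrict_le_of_subset (D (ν k)) (U := b ⁻¹' {k})
      (V := b ⁻¹' (B x \ {k})) (W := b ⁻¹' B y) (R := b ⁻¹' (J \ {k}))
      (disjoint_sdiff_right.preimage b) (preimage_mono (sdiff_subset_sdiff_left (hBJ x)))
      (preimage_mono fun i hi => ⟨hBJ y hi, fun hik => hky (hik ▸ hi)⟩) w s
    rw [← preimage_union, singleton_union, insert_sdiff_singleton, insert_eq_of_mem hkx,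
      preimage_blockIndex_singleton hm hm0, restrict_finset, map_sum] at h
    simp only [map_smul, smul_eq_mul, w, coe_toLinfty] at h
    have hJk := mul_le_mul_of_nonneg_right (hJsmall k (hBJ x hkx)) (norm_nonneg w)
    have hDk := mul_le_mul (hM (ν k)) hs.le (norm_nonneg _) hM0
    linarith [hblock k]
  have hfreq : ∃ᶠ k in atTop, k ∈ B x \ B y := by
    have h := (hBinf x).sdiff (hBad x y hxy)
    rw [sdiff_self_inter] at h
    exact Nat.frequently_atTop_iff_infinite.2 h
  have hsmall : ∀ᶠ k in atTop, |D (ν k) s| < ε / 8 :=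
    ((hD s hsS).comp hν.tendsto_atTop).abs.eventually (gt_mem_nhds (by simpa using hε))
  obtain ⟨k, hk, hk'⟩ := (hfreq.and_eventually hsmall).exists
  exact (hlarge k hk).not_gt hk'

theorem tendsto_tsum_mul_apply_eVec :
    Tendsto (fun k => ∑' i, z i * D k (eVec i)) atTop (𝓝 0) := by
  refine Metric.tendsto_nhds.2 fun ε hε => ?_
  by_contra h
  obtain ⟨φ, hφ, hφε⟩ := extraction_of_frequently_atTop (not_eventually.1 h)
  exact not_forall_le_abs_tsum_mul_apply_eVec hS (fun k => hM (φ k))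
    (fun x hx => (hD x hx).comp hφ.tendsto_atTop) hz hε
    fun k => by simpa [Real.dist_eq] using hφε k

end Subspace

end LinfGrothendieck

/-- a closed subspace `S` of `ℓ∞` containing `c₀` with `ℓ∞/S` separable is an
`ℓ∞`-Grothendieck subspace. -/
theorem linfGrothendieck_of_separable_quotient
    (S : Submodule ℝ ellInfty) (hcl : IsClosed (S : Set ellInfty))
    (hS : cZero ≤ S)
    (hsep : TopologicalSpace.SeparableSpace (ellInfty ⧸ S)) :
    IsLinfGrothendieck S := by
  refine ⟨hS, fun f g hfg z hz => ?_⟩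
  have : CompleteSpace S := hcl.completeSpace_coe
  have hd (x : S) : Tendsto (fun n => (f n - g) x) atTop (𝓝 0) := by
    simpa using (hfg x).sub_const (g x)
  obtain ⟨M, hM⟩ := banach_steinhaus fun x =>
    let ⟨C, hC⟩ := (hd x).norm.bddAbove_range; ⟨C, fun n => hC ⟨n, rfl⟩⟩
  choose D hDext hDnorm using fun n => exists_extension_norm_eq S (f n - g)
  have key := LinfGrothendieck.tendsto_tsum_mul_apply_eVec hS (fun n => (hDnorm n).trans_le (hM n))
    (fun x hx => (hd ⟨x, hx⟩).congr fun n => (hDext n ⟨x, hx⟩).symm) hz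
  rw [← tendsto_sub_nhds_zero_iff]
  refine key.congr fun n => ?_
  rw [← (LinfGrothendieck.summable_mul_apply_eIn hS (f n) hz).tsum_sub
    (LinfGrothendieck.summable_mul_apply_eIn hS g hz)]
  exact tsum_congr fun i => (congrArg (z i * ·) (hDext n (eIn S hS i))).trans (mul_sub _ _ _)
end
end

section
/- Let S be a closed subspace of ℓ∞ containing c₀. If S (with the induced norm) is a Grothendieck space, then S is an ℓ∞-Grothendieck subspace. -/
open Filter Topology MeasureTheory
open scoped ENNReal

noncomputable section

/-! The coordinate map `f ↦ (f eᵢ)ᵢ` sends `S*` into `ℓ¹` with norm at most one: testing `f` on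
`∑ i ∈ A, sign (f eᵢ) • eᵢ`, a vector of sup norm at most one, gives `∑ i ∈ A, |f eᵢ| ≤ ‖f‖`.
Hence every bounded sequence `z` defines an element `f ↦ ∑' i, zᵢ f eᵢ` of the bidual `S**`, and
`σ(S*, ℓ∞)`-convergence is convergence against these particular elements of `S**`. -/

section CoordinateFunctional

variable {X : Type*} [SeminormedAddCommGroup X] [NormedSpace ℝ X] {e : ℕ → X}

theorem summable_abs_apply (he : ∀ (h : X →L[ℝ] ℝ) (A : Finset ℕ), ∑ i ∈ A, |h (e i)| ≤ ‖h‖)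
    (h : X →L[ℝ] ℝ) : Summable fun i => |h (e i)| :=
  summable_of_sum_range_le (fun _ => abs_nonneg _) fun n => he h (Finset.range n)

theorem exists_bidual_eq_tsum_mul_apply
    (he : ∀ (h : X →L[ℝ] ℝ) (A : Finset ℕ), ∑ i ∈ A, |h (e i)| ≤ ‖h‖)
    {z : ℕ → ℝ} {C : ℝ} (hz : ∀ i, |z i| ≤ C) :
    ∃ F : (X →L[ℝ] ℝ) →L[ℝ] ℝ, ∀ h, F h = ∑' i, z i * h (e i) := by
  have hterm : ∀ (h : X →L[ℝ] ℝ) i, ‖z i * h (e i)‖ ≤ C * |h (e i)| := fun h i => by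
    rw [Real.norm_eq_abs, abs_mul]
    exact mul_le_mul_of_nonneg_right (hz i) (abs_nonneg _)
  have hsum : ∀ h : X →L[ℝ] ℝ, Summable fun i => z i * h (e i) := fun h =>
    ((summable_abs_apply he h).mul_left C).of_norm_bounded (hterm h)
  let F : (X →L[ℝ] ℝ) →ₗ[ℝ] ℝ :=
    { toFun := fun h => ∑' i, z i * h (e i)
      map_add' := fun a b => by
        simp only [add_apply, mul_add]
        exact (hsum a).tsum_add (hsum b)
      map_smul' := fun c a => by
        simp only [smul_apply, smul_eq_mul, RingHom.id_apply, mul_left_comm,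
          tsum_mul_left] }
  have hC : 0 ≤ C := (abs_nonneg _).trans (hz 0)
  have hbound : ∀ h, ‖F h‖ ≤ C * ‖h‖ := fun h =>
    calc ‖F h‖ ≤ C * ∑' i, |h (e i)| :=
          tsum_of_norm_bounded (f := fun i => z i * h (e i))
            ((summable_abs_apply he h).hasSum.mul_left C) (hterm h)
      _ ≤ C * ‖h‖ :=
          mul_le_mul_of_nonneg_left ((summable_abs_apply he h).tsum_le_of_sum_le (he h)) hC
  exact ⟨F.mkContinuous C hbound, fun _ => rfl⟩

end CoordinateFunctional

theorem abs_sign_le_one (x : ℝ) : |(SignType.sign x : ℝ)| ≤ 1 := by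
  cases SignType.sign x <;> simp

theorem norm_sum_smul_eVec_le_one (A : Finset ℕ) {ε : ℕ → ℝ} (hε : ∀ i, |ε i| ≤ 1) :
    ‖∑ i ∈ A, ε i • eVec i‖ ≤ 1 := by
  classical
  refine lp.norm_le_of_forall_le zero_le_one fun j => ?_
  have hcoord : (∑ i ∈ A, ε i • eVec i : ellInfty) j = if j ∈ A then ε j else 0 := by
    rw [lp.coeFn_sum, Finset.sum_apply]
    simp [eVec, lp.single_apply, Pi.single_apply]
  rw [hcoord]
  split_ifs
  · exact hε j
  · simp

theorem sum_abs_apply_eIn_le (S : Submodule ℝ ellInfty) (hS : cZero ≤ S) (f : ↥S →L[ℝ] ℝ)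
    (A : Finset ℕ) : ∑ i ∈ A, |f (eIn S hS i)| ≤ ‖f‖ := by
  set x : ↥S := ∑ i ∈ A, (SignType.sign (f (eIn S hS i)) : ℝ) • eIn S hS i
  have hx : ‖x‖ ≤ 1 := by
    rw [← Submodule.norm_coe]
    simpa [x, eIn] using norm_sum_smul_eVec_le_one A fun i => abs_sign_le_one (f (eIn S hS i))
  calc ∑ i ∈ A, |f (eIn S hS i)| = f x := by simp [x, map_sum]
    _ ≤ ‖f‖ * ‖x‖ := (le_abs_self _).trans (f.le_opNorm x)
    _ ≤ ‖f‖ := mul_le_of_le_one_right (norm_nonneg f) hx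

theorem linfGrothendieck_of_grothendieck_general
    (S : Submodule ℝ ellInfty)
    (hS : cZero ≤ S)
    (hG : GrothendieckSpace ↥S) :
    IsLinfGrothendieck S := by
  refine ⟨hS, fun f g hfg z ⟨C, hz⟩ => ?_⟩
  obtain ⟨F, hF⟩ := exists_bidual_eq_tsum_mul_apply (sum_abs_apply_eIn_le S hS) hz
  simpa only [hF] using hG f g hfg F

/-- a closed subspace of `ℓ∞` containing `c₀` which is a Grothendieck space is
an `ℓ∞`-Grothendieck subspace. -/
theorem linfGrothendieck_of_grothendieck
    (S : Submodule ℝ ellInfty) (hcl : IsClosed (S : Set ellInfty))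
    (hS : cZero ≤ S)
    (hG : GrothendieckSpace ↥S) :
    IsLinfGrothendieck S :=
  linfGrothendieck_of_grothendieck_general S hS hG
end
end

section
/- Let S be a closed subspace of ℓ∞ containing c₀. If S has weak*-sequentially compact dual ball, then S is not an ℓ∞-Grothendieck subspace. -/
open Filter Topology MeasureTheory
open scoped ENNReal

noncomputable section

/-!
The coordinate functionals `x ↦ xₙ` lie in the unit ball of `S*`, so some subsequence of them is
weak*-convergent. No subsequence is `σ(S*,ℓ∞)`-convergent, however: against a bounded `z` with
`z (φ k) = (-1) ^ k` the subsequence indexed by `φ` returns exactly `(-1) ^ k`.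
-/

open Function

def coordCLM (S : Submodule ℝ ellInfty) (n : ℕ) : ↥S →L[ℝ] ℝ :=
  (lp.evalCLM ℝ (fun _ : ℕ => ℝ) ∞ n).comp S.subtypeL

lemma norm_coordCLM_le (S : Submodule ℝ ellInfty) (n : ℕ) : ‖coordCLM S n‖ ≤ 1 :=
  calc ‖coordCLM S n‖ ≤ ‖lp.evalCLM ℝ (fun _ : ℕ => ℝ) ∞ n‖ * ‖S.subtypeL‖ :=
        ContinuousLinearMap.opNorm_comp_le _ _
    _ ≤ 1 * 1 := by
        gcongr
        · exact LinearMap.mkContinuous_norm_le _ zero_le_one _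
        · exact Submodule.norm_subtypeL_le S
    _ = 1 := one_mul 1

lemma tsum_mul_coordCLM_eIn (S : Submodule ℝ ellInfty) (hS : cZero ≤ S) (z : ℕ → ℝ) (n : ℕ) :
    ∑' i, z i * coordCLM S n (eIn S hS i) = z n := by
  have hδ : ∀ i, coordCLM S n (eIn S hS i) = if i = n then 1 else 0 := fun i => by
    simp [coordCLM, eIn, eVec, lp.evalCLM, lp.single_apply, Pi.single_apply, eq_comm]
  simp only [hδ, mul_ite, mul_one, mul_zero, tsum_ite_eq]

lemma not_tendsto_neg_one_pow (L : ℝ) : ¬ Tendsto (fun k : ℕ => (-1 : ℝ) ^ k) atTop (𝓝 L) := by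
  intro h
  have hsum : L + L = 0 :=
    tendsto_nhds_unique ((h.comp (tendsto_add_atTop_nat 1)).add h) (by simp [pow_succ])
  have habs : |L| = 1 := tendsto_nhds_unique h.abs (by simp)
  rw [show L = 0 by linarith] at habs
  simp at habs

lemma exists_bounded_comp_eq_neg_one_pow {φ : ℕ → ℕ} (hφ : Injective φ) :
    ∃ z : ℕ → ℝ, (∃ C : ℝ, ∀ i, |z i| ≤ C) ∧ ∀ k, z (φ k) = (-1) ^ k := by
  refine ⟨extend φ (fun k => (-1) ^ k) 0, ⟨1, fun i => ?_⟩, hφ.extend_apply _ _⟩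
  by_cases hi : ∃ k, φ k = i
  · obtain ⟨k, rfl⟩ := hi
    simp [hφ.extend_apply]
  · simp [extend_apply' _ _ _ hi]

lemma not_sigmaLinfConv_coordCLM (S : Submodule ℝ ellInfty) (hS : cZero ≤ S) {φ : ℕ → ℕ}
    (hφ : Injective φ) (g : ↥S →L[ℝ] ℝ) :
    ¬ SigmaLinfConv S hS (fun k => coordCLM S (φ k)) g := by
  intro hconv
  obtain ⟨z, hz, hzφ⟩ := exists_bounded_comp_eq_neg_one_pow hφ
  have hlim := hconv z hz
  simp only [tsum_mul_coordCLM_eIn, hzφ] at hlim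
  exact not_tendsto_neg_one_pow _ hlim

theorem not_linfGrothendieck_of_wstar_seq_compact_general
    (S : Submodule ℝ ellInfty)
    (hW : WStarSeqCompactDualBall ↥S) :
    ¬ IsLinfGrothendieck S := by
  rintro ⟨hS, hG⟩
  obtain ⟨φ, hφ, g, hg⟩ := hW (coordCLM S) (norm_coordCLM_le S)
  exact not_sigmaLinfConv_coordCLM S hS hφ.injective g (hG _ g hg)

/-- a closed subspace of `ℓ∞` containing `c₀` with weak*-sequentially compact
dual ball is not an `ℓ∞`-Grothendieck subspace. -/
theorem not_linfGrothendieck_of_wstar_seq_compact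
    (S : Submodule ℝ ellInfty) (hcl : IsClosed (S : Set ellInfty))
    (hS : cZero ≤ S)
    (hW : WStarSeqCompactDualBall ↥S) :
    ¬ IsLinfGrothendieck S :=
  not_linfGrothendieck_of_wstar_seq_compact_general S hW
end
end

section
/- Let S be a closed subspace of ℓ∞ containing c₀, and let (f_n) be a sequence in S* such that f_n(e_i) = 1 if i = n and f_n(e_i) = 0 if i ≠ n, for all n, i. Then no subsequence of (f_n) is σ(S*,ℓ∞)-convergent: for every strictly increasing sequence of indices (n_k) there exists a bounded real sequence z = (z_i) such that the sequence (Σ_i z_i f_{n_k}(e_i))_k does not converge. -/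
open Filter Topology MeasureTheory
open scoped ENNReal

noncomputable section

open scoped Classical in
/-- if `(fₙ)` in `S*` satisfies `fₙ(eᵢ) = δᵢₙ`, then no subsequence of `(fₙ)`
is `σ(S*,ℓ∞)`-convergent. -/
theorem no_sigma_convergent_subsequence
    (S : Submodule ℝ ellInfty) (hcl : IsClosed (S : Set ellInfty))
    (hS : cZero ≤ S)
    (f : ℕ → (↥S →L[ℝ] ℝ))
    (hf : ∀ n i, f n (eIn S hS i) = if i = n then 1 else 0) :
    ∀ φ : ℕ → ℕ, StrictMono φ →
      ∃ z : ℕ → ℝ, (∃ C : ℝ, ∀ i, |z i| ≤ C) ∧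
        ¬ ∃ L : ℝ, Tendsto (fun k => ∑' i, z i * f (φ k) (eIn S hS i)) atTop (nhds L) := by
  intro φ hφ
  refine ⟨fun i => if ∃ m, i = φ (2 * m) then 1 else 0, ⟨1, fun i => by dsimp only; split <;> simp⟩, ?_⟩
  have hsum : ∀ k, (∑' i, (if ∃ m, i = φ (2 * m) then (1:ℝ) else 0) * f (φ k) (eIn S hS i))
      = if Even k then 1 else 0 := by
    intro k
    have h1 : (∑' i, (if ∃ m, i = φ (2 * m) then (1:ℝ) else 0) * f (φ k) (eIn S hS i))
        = (if ∃ m, φ k = φ (2 * m) then (1:ℝ) else 0) := by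
      rw [tsum_eq_single (φ k)]
      · rw [hf]; simp
      · intro i hi; rw [hf]; simp [hi]
    rw [h1]
    congr 1
    simp only [eq_iff_iff]
    constructor
    · rintro ⟨m, hm⟩
      exact (hφ.injective hm) ▸ ⟨m, (two_mul m).symm ▸ rfl⟩
    · rintro ⟨m, hm⟩
      exact ⟨m, congrArg φ (by omega)⟩
  rintro ⟨L, hL⟩
  rw [show (fun k => ∑' i, (if ∃ m, i = φ (2 * m) then (1:ℝ) else 0) * f (φ k) (eIn S hS i))
      = fun k => if Even k then (1:ℝ) else 0 from funext hsum] at hL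
  have h0 : Tendsto (fun m : ℕ => if Even (2 * m) then (1:ℝ) else 0) atTop (nhds L) :=
    hL.comp (tendsto_atTop_mono (fun m => Nat.le_mul_of_pos_left m two_pos) tendsto_id)
  have h1 : Tendsto (fun m : ℕ => if Even (2 * m + 1) then (1:ℝ) else 0) atTop (nhds L) :=
    hL.comp (tendsto_atTop_mono (fun m => Nat.le_succ_of_le
      (Nat.le_mul_of_pos_left m two_pos)) tendsto_id)
  have e0 : (fun m : ℕ => if Even (2 * m) then (1:ℝ) else 0) = fun _ => (1:ℝ) := by
    funext m; simp [Nat.even_mul]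
  have e1 : (fun m : ℕ => if Even (2 * m + 1) then (1:ℝ) else 0) = fun _ => (0:ℝ) := by
    funext m; simp [Nat.even_add_one, Nat.even_mul]
  rw [e0] at h0; rw [e1] at h1
  have hα : L = 1 := tendsto_nhds_unique h0 tendsto_const_nhds
  have hβ : L = 0 := tendsto_nhds_unique h1 tendsto_const_nhds
  linarith
end
end

section
/- There exists a surjective bounded linear operator Q : ℓ∞ → ℓ∞ whose kernel contains c₀; equivalently, the quotient Banach space ℓ∞/c₀ admits a quotient isomorphic to ℓ∞. -/
open Filter Topology MeasureTheory
open scoped ENNReal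

noncomputable section

/-! Write `ℕ` as the disjoint union of the infinite rows `{pair k n | n ∈ ℕ}` and send `x ∈ ℓ∞` to
the sequence whose `k`-th term is the limit of `x` along row `k` with respect to a free ultrafilter.
Bounded sequences always have such limits, so this is a norm-one operator; it is onto because a
sequence constant on each row is mapped to its row values, and it kills `c₀` because a free
ultrafilter on `ℕ` refines `atTop`. -/

open scoped lp

theorem Ultrafilter.exists_tendsto_of_norm_le {ι E : Type*} [SeminormedAddCommGroup E]
    [ProperSpace E] (U : Ultrafilter ι) {f : ι → E} {C : ℝ} (hf : ∀ i, ‖f i‖ ≤ C) :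
    ∃ c, Tendsto f U (𝓝 c) := by
  obtain ⟨c, -, hc⟩ := (isCompact_closedBall (0 : E) C).ultrafilter_le_nhds (U.map f) <|
    le_principal_iff.2 <| mem_map.2 <| univ_mem' fun i => mem_closedBall_zero_iff.2 (hf i)
  exact ⟨c, hc⟩

theorem Memℓp.comp_infty {α γ E : Type*} [NormedAddCommGroup E] {f : γ → E}
    (hf : Memℓp f ∞) (σ : α → γ) : Memℓp (f ∘ σ) ∞ :=
  memℓp_infty <| hf.bddAbove.mono <| Set.range_comp_subset_range σ fun c => ‖f c‖

theorem Nat.tendsto_pair_atTop (k : ℕ) : Tendsto (Nat.pair k) atTop atTop :=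
  tendsto_atTop_mono (Nat.right_le_pair k) tendsto_id

section rowUltralimit

variable {α β γ : Type*} (𝕜 : Type*) {E : Type*} [NormedField 𝕜] [NormedAddCommGroup E]
  [NormedSpace 𝕜 E] (U : Ultrafilter β) (σ : α → β → γ)

def rowUltralimitFun (x : ℓ^∞(γ, E)) (a : α) : E :=
  limUnder (U : Filter β) fun b => x (σ a b)

theorem rowUltralimitFun_eq_of_tendsto {x : ℓ^∞(γ, E)} {a : α} {c : E}
    (h : Tendsto (fun b => x (σ a b)) U (𝓝 c)) : rowUltralimitFun U σ x a = c :=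
  h.limUnder_eq

variable [ProperSpace E]

theorem tendsto_rowUltralimitFun (x : ℓ^∞(γ, E)) (a : α) :
    Tendsto (fun b => x (σ a b)) U (𝓝 (rowUltralimitFun U σ x a)) :=
  tendsto_nhds_limUnder <| U.exists_tendsto_of_norm_le fun b =>
    lp.norm_apply_le_norm ENNReal.top_ne_zero x (σ a b)

theorem norm_rowUltralimitFun_le (x : ℓ^∞(γ, E)) (a : α) : ‖rowUltralimitFun U σ x a‖ ≤ ‖x‖ :=
  le_of_tendsto (tendsto_rowUltralimitFun U σ x a).norm <| Eventually.of_forall fun b =>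
    lp.norm_apply_le_norm ENNReal.top_ne_zero x (σ a b)

theorem memℓp_rowUltralimitFun (x : ℓ^∞(γ, E)) : Memℓp (rowUltralimitFun U σ x) ∞ :=
  memℓp_infty ⟨‖x‖, by
    rintro _ ⟨a, rfl⟩
    exact norm_rowUltralimitFun_le U σ x a⟩

def rowUltralimitₗ : ℓ^∞(γ, E) →ₗ[𝕜] ℓ^∞(α, E) where
  toFun x := ⟨rowUltralimitFun U σ x, memℓp_rowUltralimitFun U σ x⟩
  map_add' x y := lp.ext <| funext fun a => rowUltralimitFun_eq_of_tendsto U σ <|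
    (tendsto_rowUltralimitFun U σ x a).add (tendsto_rowUltralimitFun U σ y a)
  map_smul' c x := lp.ext <| funext fun a => rowUltralimitFun_eq_of_tendsto U σ <|
    (tendsto_rowUltralimitFun U σ x a).const_smul c

def rowUltralimit : ℓ^∞(γ, E) →L[𝕜] ℓ^∞(α, E) :=
  (rowUltralimitₗ 𝕜 U σ).mkContinuous 1 fun x => by
    rw [one_mul]
    exact lp.norm_le_of_forall_le (norm_nonneg x) (norm_rowUltralimitFun_le U σ x)

variable {𝕜 U σ}

theorem rowUltralimit_apply_eq_of_tendsto {x : ℓ^∞(γ, E)} {a : α} {c : E}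
    (h : Tendsto (fun b => x (σ a b)) U (𝓝 c)) : rowUltralimit 𝕜 U σ x a = c :=
  rowUltralimitFun_eq_of_tendsto U σ h

theorem rowUltralimit_surjective {π : γ → α} (hπ : ∀ a b, π (σ a b) = a) :
    Function.Surjective (rowUltralimit 𝕜 U σ : ℓ^∞(γ, E) → ℓ^∞(α, E)) := fun y =>
  ⟨⟨_, (lp.memℓp y).comp_infty π⟩, lp.ext <| funext fun a =>
    rowUltralimit_apply_eq_of_tendsto <| by simp [hπ]⟩

theorem rowUltralimit_eq_zero_of_tendsto {l : Filter γ} (hσ : ∀ a, Tendsto (σ a) U l)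
    {x : ℓ^∞(γ, E)} (hx : Tendsto (fun c => x c) l (𝓝 0)) : rowUltralimit 𝕜 U σ x = 0 :=
  lp.ext <| funext fun a => rowUltralimit_apply_eq_of_tendsto <| hx.comp (hσ a)

end rowUltralimit

/-- there is a surjective bounded operator `Q : ℓ∞ → ℓ∞` whose kernel
contains `c₀`. -/
theorem exists_surjective_operator_kernel_contains_cZero :
    ∃ Q : ellInfty →L[ℝ] ellInfty, Function.Surjective Q ∧ cZero ≤ LinearMap.ker (Q : ellInfty →ₗ[ℝ] ellInfty) :=
  ⟨rowUltralimit ℝ (hyperfilter ℕ) Nat.pair,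
    rowUltralimit_surjective (π := fun m => m.unpair.1) fun a b => by simp,
    fun _ hx => rowUltralimit_eq_zero_of_tendsto
      (fun k => (Nat.tendsto_pair_atTop k).mono_left Nat.hyperfilter_le_atTop) hx⟩
end
end
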